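/- arXiv:2002.01524 — 13 statements merged into one kernel-verified Lean document; each statement's English description precedes it below -/
import Mathlib

section
/- Let N ≥ 1, η_ch, η_dis ∈ (0, 1], and for each i ∈ {1,…,N} let z_i ∈ ℝ, p_b(i) ≥ p_s(i) ≥ 0, and X_min^i ≤ X_max^i. Let b_min ≤ b_max, b_0 ∈ ℝ. Define f(x) = (1/η_ch)·[x]⁺ − η_dis·[x]⁻, C_i(x) = [z_i + f(x)]⁺·p_b(i) − [z_i + f(x)]⁻·p_s(i), and the feasible set K = { x ∈ ℝ^N : b_min − b_0 ≤ Σ_{j=1}^i x_j ≤ b_max − b_0 for all i, and X_min^i ≤ x_i ≤ X_max^i for all i }. Suppose x* ∈ K, and suppose there exist nonnegative reals α_1,…,α_N and β_1,…,β_N such that, with b*_i := b_0 + Σ_{j=1}^i x*_j, the complementary slackness conditions α_i·(b_min − b*_i) = 0 and β_i·(b*_i − b_max) = 0 hold for all i. Define μ_i := Σ_{j=i}^N (α_j − β_j), and suppose that for each i, x*_i minimizes the function x ↦ C_i(x) − μ_i·x over the interval [X_min^i, X_max^i]. Then x* is optimal for P_NEM, i.e. Σ_{i=1}^N C_i(x*_i)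 ≤ Σ_{i=1}^N C_i(x_i) for every x ∈ K. -/
/-- Sufficiency direction of Theorem 2: if `x* ∈ K`, there are
nonnegative multipliers `α, β` satisfying complementary slackness for the
battery levels `b*_i = b_0 + Σ_{j≤i} x*_j`, and with the accumulated Lagrange
multipliers `μ_i = Σ_{j≥i} (α_j − β_j)` each `x*_i` minimizes
`x ↦ C_i(x) − μ_i·x` over `[X_min^i, X_max^i]`, then `x*` is optimal for P_NEM. -/
theorem P_NEM_KKT_sufficient (N : ℕ) (hN : 1 ≤ N) (ηch ηdis : ℝ)
    (hch : ηch ∈ Set.Ioc (0 : ℝ) 1) (hdis : ηdis ∈ Set.Ioc (0 : ℝ) 1)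
    (z pb ps : Fin N → ℝ) (hp : ∀ i, pb i ≥ ps i) (hps : ∀ i, ps i ≥ 0)
    (Xmin Xmax : Fin N → ℝ) (hX : ∀ i, Xmin i ≤ Xmax i)
    (bmin bmax b0 : ℝ) (hb : bmin ≤ bmax)
    (f : ℝ → ℝ) (hf : ∀ x, f x = (1 / ηch) * max x 0 - ηdis * max (-x) 0)
    (C : Fin N → ℝ → ℝ)
    (hC : ∀ i x, C i x = max (z i + f x) 0 * pb i - max (-(z i + f x)) 0 * ps i)
    (K : Set (Fin N → ℝ))
    (hK : K = {x : Fin N → ℝ |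
      (∀ i, bmin - b0 ≤ ∑ j ∈ Finset.Iic i, x j ∧ ∑ j ∈ Finset.Iic i, x j ≤ bmax - b0) ∧
      (∀ i, Xmin i ≤ x i ∧ x i ≤ Xmax i)})
    (xstar : Fin N → ℝ) (hxK : xstar ∈ K)
    (α β : Fin N → ℝ) (hα : ∀ i, 0 ≤ α i) (hβ : ∀ i, 0 ≤ β i)
    (bstar : Fin N → ℝ) (hbstar : ∀ i, bstar i = b0 + ∑ j ∈ Finset.Iic i, xstar j)
    (hcs1 : ∀ i, α i * (bmin - bstar i) = 0)
    (hcs2 : ∀ i, β i * (bstar i - bmax) = 0)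
    (μ : Fin N → ℝ) (hμ : ∀ i, μ i = ∑ j ∈ Finset.Ici i, (α j - β j))
    (hmin : ∀ i, ∀ x ∈ Set.Icc (Xmin i) (Xmax i),
      C i (xstar i) - μ i * xstar i ≤ C i x - μ i * x) :
    ∀ x ∈ K, ∑ i, C i (xstar i) ≤ ∑ i, C i (x i) := by

  intro x hx
  subst hK
  obtain ⟨hxb, hxbox⟩ := hx
  obtain ⟨hsb, hsbox⟩ := hxK
  -- key: ∑ i, μ i * (xstar i - x i) ≤ 0
  have key : ∑ i, μ i * (xstar i - x i) ≤ 0 := by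
    have swap : ∑ i, μ i * (xstar i - x i)
        = ∑ j, (α j - β j) * ((∑ i ∈ Finset.Iic j, xstar i) - ∑ i ∈ Finset.Iic j, x i) := by
      simp only [hμ, Finset.sum_mul]
      rw [Finset.sum_comm' (s := Finset.univ) (t := fun i => Finset.Ici i)
        (t' := Finset.univ) (s' := fun j => Finset.Iic j)
        (by intro i j; simp [Finset.mem_Ici, Finset.mem_Iic])]
      refine Finset.sum_congr rfl fun j _ => ?_
      rw [← Finset.sum_sub_distrib, Finset.mul_sum]
    rw [swap]
    apply Finset.sum_nonpos
    intro j _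
    have h1 : α j * (∑ i ∈ Finset.Iic j, xstar i) = α j * (bmin - b0) := by
      have := hcs1 j
      rw [hbstar j] at this
      nlinarith [this]
    have h2 : β j * (∑ i ∈ Finset.Iic j, xstar i) = β j * (bmax - b0) := by
      have := hcs2 j
      rw [hbstar j] at this
      nlinarith [this]
    have hl := (hxb j).1
    have hr := (hxb j).2
    have hαj := hα j
    have hβj := hβ j
    nlinarith [mul_nonneg hαj (sub_nonneg.2 hl), mul_nonneg hβj (sub_nonneg.2 hr)]
  have step : ∀ i, C i (xstar i) ≤ C i (x i) + μ i * (xstar i - x i) := by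
    intro i
    have := hmin i (x i) ⟨(hxbox i).1, (hxbox i).2⟩
    nlinarith [this]
  calc ∑ i, C i (xstar i) ≤ ∑ i, (C i (x i) + μ i * (xstar i - x i)) :=
        Finset.sum_le_sum fun i _ => step i
    _ = ∑ i, C i (x i) + ∑ i, μ i * (xstar i - x i) := Finset.sum_add_distrib
    _ ≤ ∑ i, C i (x i) := by linarith
end

section
/- Fix η_ch, η_dis ∈ (0, 1], reals p_b ≥ p_s ≥ 0, z ∈ ℝ, S_min ≤ 0 ≤ S_max, and μ ∈ ℝ. Define G_μ(s) = [z+s]⁺·p_b − [z+s]⁻·p_s − μ·(η_ch·[s]⁺ − (1/η_dis)·[s]⁻) for s ∈ [S_min, S_max], and set μ₁ = η_dis·p_s. If μ < μ₁, then the set of minimizers of G_μ on [S_min, S_max] is exactly {S_min}. -/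
/-- Region 1 of Theorem 3: if μ < μ₁ = η_dis·p_s, the minimizers of G_μ on [S_min, S_max] are exactly {S_min}. -/
theorem region1_minimizers (ηch ηdis pb ps z Smin Smax μ : ℝ)
    (hch : ηch ∈ Set.Ioc (0 : ℝ) 1) (hdis : ηdis ∈ Set.Ioc (0 : ℝ) 1)
    (hpb : pb ≥ ps) (hps : ps ≥ 0) (hS1 : Smin ≤ 0) (hS2 : 0 ≤ Smax)
    (G : ℝ → ℝ)
    (hG : ∀ s, G s = max (z + s) 0 * pb - max (-(z + s)) 0 * ps
        - μ * (ηch * max s 0 - (1 / ηdis) * max (-s) 0))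
    (hμ : μ < ηdis * ps) :
    {s ∈ Set.Icc Smin Smax | ∀ t ∈ Set.Icc Smin Smax, G s ≤ G t} = {Smin} := by
  obtain ⟨hc0, hc1⟩ := hch
  obtain ⟨hd0, hd1⟩ := hdis
  -- f(a) = max a 0 * pb - max (-a) 0 * ps satisfies f a - f b ≥ ps (a-b) for b ≤ a
  have hf : ∀ a b : ℝ, b ≤ a →
      ps * (a - b) ≤ (max a 0 * pb - max (-a) 0 * ps) - (max b 0 * pb - max (-b) 0 * ps) := by
    intro a b hab
    rcases le_total a 0 with h|h <;> rcases le_total b 0 with h'|h'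
    · rw [max_eq_right h, max_eq_left (by linarith), max_eq_right h',
        max_eq_left (by linarith)]
      ring_nf
      nlinarith
    · have hb0 : b = 0 := le_antisymm (hab.trans h) h'
      have ha0 : a = 0 := le_antisymm h (hb0 ▸ hab)
      simp [ha0, hb0]
    · rw [max_eq_left h, max_eq_right (by linarith), max_eq_right h',
        max_eq_left (by linarith)]
      nlinarith
    · rw [max_eq_left h, max_eq_right (by linarith), max_eq_left h',
        max_eq_right (by linarith)]
      nlinarith
  -- h(s) = ηch max s 0 - (1/ηdis) max (-s) 0 has slope in [ηch, 1/ηdis]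
  have hinv : (1:ℝ) ≤ 1 / ηdis := by
    rw [le_div_iff₀ hd0]; linarith
  have hh : ∀ a b : ℝ, b ≤ a →
      ηch * (a - b) ≤ (ηch * max a 0 - (1/ηdis) * max (-a) 0)
        - (ηch * max b 0 - (1/ηdis) * max (-b) 0) ∧
      (ηch * max a 0 - (1/ηdis) * max (-a) 0)
        - (ηch * max b 0 - (1/ηdis) * max (-b) 0) ≤ (1/ηdis) * (a - b) := by
    intro a b hab
    rcases le_total a 0 with h|h <;> rcases le_total b 0 with h'|h'
    · rw [max_eq_right h, max_eq_left (by linarith), max_eq_right h',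
        max_eq_left (by linarith)]
      constructor <;> nlinarith
    · have hb0 : b = 0 := le_antisymm (hab.trans h) h'
      have ha0 : a = 0 := le_antisymm h (hb0 ▸ hab)
      simp [ha0, hb0]
    · rw [max_eq_left h, max_eq_right (by linarith), max_eq_right h',
        max_eq_left (by linarith)]
      constructor <;> nlinarith
    · rw [max_eq_left h, max_eq_right (by linarith), max_eq_left h',
        max_eq_right (by linarith)]
      constructor <;> nlinarith
  -- strict monotonicity of G
  have hmono : ∀ t s : ℝ, t < s → G t < G s := by
    intro t s hts
    rw [hG t, hG s]
    have hF := hf (z + s) (z + t) (by linarith)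
    obtain ⟨hH1, hH2⟩ := hh s t hts.le
    have hps' : μ / ηdis < ps := by
      rw [div_lt_iff₀ hd0]; nlinarith
    rcases le_total μ 0 with hμ0|hμ0
    · -- μ ≤ 0 : use μ * (h s - h t) ≤ μ * ηch * (s - t)
      have h1 : μ * ((ηch * max s 0 - (1/ηdis) * max (-s) 0)
          - (ηch * max t 0 - (1/ηdis) * max (-t) 0)) ≤ μ * (ηch * (s - t)) := by
        nlinarith [mul_nonneg (neg_nonneg.2 hμ0) (sub_nonneg.2 hH1)]
      have hkey : μ * ηch < ps := by
        nlinarith [mul_pos hc0 (sub_pos.2 hμ),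
          mul_nonneg hps (by nlinarith : (0:ℝ) ≤ 1 - ηch * ηdis)]
      linarith [mul_pos (sub_pos.2 hkey) (sub_pos.2 hts)]
    · -- μ ≥ 0 : use μ * (h s - h t) ≤ μ * (1/ηdis) * (s - t)
      have h1 : μ * ((ηch * max s 0 - (1/ηdis) * max (-s) 0)
          - (ηch * max t 0 - (1/ηdis) * max (-t) 0)) ≤ μ * ((1/ηdis) * (s - t)) :=
        mul_le_mul_of_nonneg_left hH2 hμ0
      have h2 : μ * ((1/ηdis) * (s - t)) < ps * (s - t) := by
        have : μ * (1/ηdis) < ps := by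
          rw [mul_one_div]; exact hps'
        nlinarith [sub_pos.2 hts]
      linarith
  -- conclude
  ext x
  simp only [Set.mem_setOf_eq, Set.mem_singleton_iff, Set.mem_Icc]
  constructor
  · rintro ⟨⟨hx1, hx2⟩, hmin⟩
    by_contra hne
    have hlt : Smin < x := lt_of_le_of_ne hx1 (Ne.symm hne)
    have := hmin Smin ⟨le_refl _, by linarith⟩
    exact absurd this (not_le.2 (hmono Smin x hlt))
  · rintro rfl
    refine ⟨⟨le_refl _, by linarith⟩, ?_⟩
    rintro t ⟨ht1, ht2⟩
    rcases eq_or_lt_of_le ht1 with heq|h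
    · exact le_of_eq (by rw [heq])
    · exact (hmono _ t h).le
end

section
/- Fix η_ch, η_dis ∈ (0, 1], reals p_b ≥ p_s ≥ 0, z ∈ ℝ, S_min ≤ 0 ≤ S_max. Define G_μ(s) = [z+s]⁺·p_b − [z+s]⁻·p_s − μ·(η_ch·[s]⁺ − (1/η_dis)·[s]⁻) for s ∈ [S_min, S_max], set μ₁ = η_dis·p_s, μ₂ = p_s/η_ch, μ₃ = η_dis·p_b, and m⁻ = min(0, max(−z, S_min)). Assume μ₁ < min(μ₂, μ₃). If μ = μ₁, then the set of minimizers of G_μ on [S_min, S_max] is exactly the closed interval [S_min, m⁻]. -/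
/-- Region 2 of Theorem 3: assuming μ₁ < min(μ₂, μ₃), if μ = μ₁ = η_dis·p_s, the minimizers of G_μ on [S_min, S_max] form exactly the interval [S_min, m⁻] with m⁻ = min(0, max(−z, S_min)). -/
theorem region2_minimizers (ηch ηdis pb ps z Smin Smax μ : ℝ)
    (hch : ηch ∈ Set.Ioc (0 : ℝ) 1) (hdis : ηdis ∈ Set.Ioc (0 : ℝ) 1)
    (hpb : pb ≥ ps) (hps : ps ≥ 0) (hS1 : Smin ≤ 0) (hS2 : 0 ≤ Smax)
    (G : ℝ → ℝ)
    (hG : ∀ s, G s = max (z + s) 0 * pb - max (-(z + s)) 0 * ps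
        - μ * (ηch * max s 0 - (1 / ηdis) * max (-s) 0))
    (hlt : ηdis * ps < min (ps / ηch) (ηdis * pb)) (hμ : μ = ηdis * ps) :
    {s ∈ Set.Icc Smin Smax | ∀ t ∈ Set.Icc Smin Smax, G s ≤ G t} = Set.Icc Smin (min 0 (max (-z) Smin)) := by
  obtain ⟨hch0, hch1⟩ := hch
  obtain ⟨hdis0, hdis1⟩ := hdis
  have hA : ps < pb := by
    have h := (lt_min_iff.mp hlt).2
    exact lt_of_mul_lt_mul_left h hdis0.le
  have hB : 0 < ps * (1 - ηdis * ηch) := by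
    have h := (lt_min_iff.mp hlt).1
    rw [lt_div_iff₀ hch0] at h
    nlinarith
  set M := min 0 (max (-z) Smin) with hMdef
  have hM0 : M ≤ 0 := min_le_left _ _
  have hMS : Smin ≤ M := le_min hS1 (le_max_right _ _)
  have hmaxneg : ∀ a : ℝ, max (-a) 0 = max a 0 - a := by
    intro a
    rcases le_total a 0 with h | h
    · rw [max_eq_left (neg_nonneg.mpr h), max_eq_right h]; ring
    · rw [max_eq_right (neg_nonpos.mpr h), max_eq_left h]; ring
  have hGF : ∀ s, G s = ps * z + (pb - ps) * max (z + s) 0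
      + ps * (1 - ηdis * ηch) * max s 0 := by
    intro s
    rw [hG, hμ, hmaxneg, hmaxneg]
    field_simp
    ring
  have hEq : ∀ s, Smin ≤ s → s ≤ M → G s = G M := by
    intro s hs1 hs2
    rcases le_total (-z) Smin with hzS | hzS
    · have hM : M = Smin := by
        rw [hMdef, max_eq_right hzS, min_eq_right hS1]
      have : s = M := le_antisymm hs2 (hM ▸ hs1)
      rw [this]
    · have hMz : M ≤ -z := by
        rw [hMdef, max_eq_left hzS]; exact min_le_right _ _
      have hzs : z + s ≤ 0 := by linarith
      have hzM : z + M ≤ 0 := by linarith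
      rw [hGF, hGF, max_eq_right hzs, max_eq_right hzM,
        max_eq_right (le_trans hs2 hM0), max_eq_right hM0]
  have hLt : ∀ s, M < s → G M < G s := by
    intro s hs
    rcases le_or_gt s 0 with hs0 | hs0
    · have hMneg : M < 0 := lt_of_lt_of_le hs hs0
      have hMx : M = max (-z) Smin := by
        rcases le_total 0 (max (-z) Smin) with h | h
        · exfalso; rw [hMdef, min_eq_left h] at hMneg; linarith
        · rw [hMdef, min_eq_right h]
      have hzM : -z ≤ M := hMx ▸ le_max_left _ _
      have hzs : 0 < z + s := by linarith
      have hmax : max (z + M) 0 < z + s := max_lt (by linarith) hzs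
      rw [hGF, hGF, max_eq_right hM0, max_eq_right hs0,
        max_eq_left hzs.le]
      nlinarith [le_max_right (z + M) (0:ℝ)]
    · have h1 : max (z + M) 0 ≤ max (z + s) 0 :=
        max_le_max (by linarith) le_rfl
      have h2 : 0 < ps * (1 - ηdis * ηch) * s := mul_pos hB hs0
      rw [hGF, hGF, max_eq_right hM0, max_eq_left hs0.le]
      nlinarith
  have hMmem : M ∈ Set.Icc Smin Smax := ⟨hMS, le_trans hM0 hS2⟩
  ext s
  simp only [Set.mem_setOf_eq, Set.mem_Icc]
  constructor
  · rintro ⟨⟨hs1, hs2⟩, hmin⟩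
    refine ⟨hs1, ?_⟩
    by_contra h
    push_neg at h
    exact absurd (hmin M hMmem) (not_le.mpr (hLt s h))
  · rintro ⟨hs1, hs2⟩
    refine ⟨⟨hs1, le_trans hs2 (le_trans hM0 hS2)⟩, ?_⟩
    intro t ⟨ht1, ht2⟩
    rw [hEq s hs1 hs2]
    rcases le_or_gt t M with h | h
    · rw [hEq t ht1 h]
    · exact (hLt t h).le
end

section
/- Fix η_ch, η_dis ∈ (0, 1], reals p_b ≥ p_s ≥ 0, z ∈ ℝ, S_min ≤ 0 ≤ S_max, and μ ∈ ℝ. Define G_μ(s) = [z+s]⁺·p_b − [z+s]⁻·p_s − μ·(η_ch·[s]⁺ − (1/η_dis)·[s]⁻) for s ∈ [S_min, S_max], and set μ₁ = η_dis·p_s, μ₂ = p_s/η_ch, μ₃ = η_dis·p_b. If μ₁ < μ < min(μ₂, μ₃), then the set of minimizers of G_μ on [S_min, S_max] is exactly {m⁻}, where m⁻ = min(0, max(−z, S_min)). -/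
set_option maxHeartbeats 1000000


/-- Region 3 of Theorem 3: if μ₁ < μ < min(μ₂, μ₃), the minimizers of G_μ on [S_min, S_max] are exactly {m⁻} with m⁻ = min(0, max(−z, S_min)). -/
theorem region3_minimizers (ηch ηdis pb ps z Smin Smax μ : ℝ)
    (hch : ηch ∈ Set.Ioc (0 : ℝ) 1) (hdis : ηdis ∈ Set.Ioc (0 : ℝ) 1)
    (hpb : pb ≥ ps) (hps : ps ≥ 0) (hS1 : Smin ≤ 0) (hS2 : 0 ≤ Smax)
    (G : ℝ → ℝ)
    (hG : ∀ s, G s = max (z + s) 0 * pb - max (-(z + s)) 0 * ps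
        - μ * (ηch * max s 0 - (1 / ηdis) * max (-s) 0))
    (hμ1 : ηdis * ps < μ) (hμ2 : μ < min (ps / ηch) (ηdis * pb)) :
    {s ∈ Set.Icc Smin Smax | ∀ t ∈ Set.Icc Smin Smax, G s ≤ G t} = {min 0 (max (-z) Smin)} := by
  obtain ⟨hch0, hch1⟩ := hch
  obtain ⟨hdis0, hdis1⟩ := hdis
  have hμa : μ < ps / ηch := lt_of_lt_of_le hμ2 (min_le_left _ _)
  have hμb : μ < ηdis * pb := lt_of_lt_of_le hμ2 (min_le_right _ _)
  have hA : μ * ηch < ps := (lt_div_iff₀ hch0).mp hμa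
  have hμ0 : 0 < μ := lt_of_le_of_lt (mul_nonneg hdis0.le hps) hμ1
  have hps0 : 0 < ps := lt_trans (mul_pos hμ0 hch0) hA
  set c : ℝ := 1 / ηdis with hcdef
  have hc0 : 0 < c := by positivity
  have hB : ps < μ * c := by
    rw [hcdef, mul_one_div]; exact (lt_div_iff₀ hdis0).mpr (by linarith)
  have hC : μ * c < pb := by
    rw [hcdef, mul_one_div]; exact (div_lt_iff₀ hdis0).mpr (by linarith)
  have hc_ge1 : (1 : ℝ) ≤ c := by rw [hcdef, le_div_iff₀ hdis0]; linarith
  have hμcη : μ * ηch ≤ μ * c :=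
    mul_le_mul_of_nonneg_left (by linarith) hμ0.le
  set m := min 0 (max (-z) Smin) with hm
  have hmle : m ≤ 0 := min_le_left _ _
  have hmge : Smin ≤ m := le_min hS1 (le_max_right _ _)
  have hmem : m ∈ Set.Icc Smin Smax := ⟨hmge, le_trans hmle hS2⟩
  have key : ∀ t ∈ Set.Icc Smin Smax, t ≠ m → G m < G t := by
    intro t ht htne
    obtain ⟨ht1, ht2⟩ := ht
    rw [hG, hG]
    rcases le_total z 0 with hz | hz
    · -- z ≤ 0, so m = 0
      have hm0 : m = 0 := by
        rw [hm, max_eq_left (by linarith : Smin ≤ -z),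
          min_eq_left (by linarith : (0:ℝ) ≤ -z)]
      rw [hm0] at htne ⊢
      simp only [add_zero, neg_zero, max_self]
      rw [max_eq_right hz, max_eq_left (by linarith : (0:ℝ) ≤ -z)]
      rcases le_total t 0 with ht0 | ht0
      · have htlt : t < 0 := lt_of_le_of_ne ht0 htne
        rw [max_eq_right (by linarith : z + t ≤ 0),
          max_eq_left (by linarith : (0:ℝ) ≤ -(z + t)),
          max_eq_right ht0, max_eq_left (by linarith : (0:ℝ) ≤ -t)]
        nlinarith [mul_pos (by linarith : (0:ℝ) < -t) (by linarith : (0:ℝ) < μ * c - ps)]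
      · have htlt : 0 < t := lt_of_le_of_ne ht0 (Ne.symm htne)
        rw [max_eq_left ht0, max_eq_right (by linarith : -t ≤ 0)]
        rcases le_total (z + t) 0 with hzt | hzt
        · rw [max_eq_right hzt, max_eq_left (by linarith : (0:ℝ) ≤ -(z + t))]
          nlinarith [mul_pos htlt (by linarith : (0:ℝ) < ps - μ * ηch)]
        · rw [max_eq_left hzt, max_eq_right (by linarith : -(z + t) ≤ 0)]
          nlinarith [mul_pos htlt (by linarith : (0:ℝ) < ps - μ * ηch),
            mul_nonneg (by linarith : (0:ℝ) ≤ z + t) (by linarith : (0:ℝ) ≤ pb - ps)]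
    · rcases le_total (-z) Smin with hzs | hzs
      · -- m = Smin
        have hm0 : m = Smin := by rw [hm, max_eq_right hzs, min_eq_right hS1]
        rw [hm0] at htne ⊢
        have htgt : Smin < t := lt_of_le_of_ne ht1 (Ne.symm htne)
        rw [max_eq_left (by linarith : (0:ℝ) ≤ z + Smin),
          max_eq_right (by linarith : -(z + Smin) ≤ 0),
          max_eq_right hS1, max_eq_left (by linarith : (0:ℝ) ≤ -Smin)]
        rcases le_total t 0 with ht0 | ht0
        · rw [max_eq_left (by linarith : (0:ℝ) ≤ z + t),
            max_eq_right (by linarith : -(z + t) ≤ 0),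
            max_eq_right ht0, max_eq_left (by linarith : (0:ℝ) ≤ -t)]
          nlinarith [mul_pos (by linarith : (0:ℝ) < t - Smin)
            (by linarith : (0:ℝ) < pb - μ * c)]
        · rw [max_eq_left (by linarith : (0:ℝ) ≤ z + t),
            max_eq_right (by linarith : -(z + t) ≤ 0),
            max_eq_left ht0, max_eq_right (by linarith : -t ≤ 0)]
          nlinarith [mul_pos (by linarith : (0:ℝ) < t - Smin)
            (by linarith : (0:ℝ) < pb - μ * c),
            mul_nonneg ht0 (by linarith : (0:ℝ) ≤ μ * c - μ * ηch)]
      · -- m = -z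
        have hm0 : m = -z := by
          rw [hm, max_eq_left hzs, min_eq_right (by linarith : -z ≤ 0)]
        rw [hm0] at htne ⊢
        simp only [add_neg_cancel, neg_zero, max_self, neg_neg]
        rw [max_eq_right (by linarith : -z ≤ 0), max_eq_left hz]
        rcases le_total t (-z) with htz | htz
        · have htlt : t < -z := lt_of_le_of_ne htz htne
          rw [max_eq_right (by linarith : z + t ≤ 0),
            max_eq_left (by linarith : (0:ℝ) ≤ -(z + t)),
            max_eq_right (by linarith : t ≤ 0), max_eq_left (by linarith : (0:ℝ) ≤ -t)]
          nlinarith [mul_pos (by linarith : (0:ℝ) < -(z + t))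
            (by linarith : (0:ℝ) < μ * c - ps)]
        · have htgt : -z < t := lt_of_le_of_ne htz (Ne.symm htne)
          rcases le_total t 0 with ht0 | ht0
          · rw [max_eq_left (by linarith : (0:ℝ) ≤ z + t),
              max_eq_right (by linarith : -(z + t) ≤ 0),
              max_eq_right ht0, max_eq_left (by linarith : (0:ℝ) ≤ -t)]
            nlinarith [mul_pos (by linarith : (0:ℝ) < z + t)
              (by linarith : (0:ℝ) < pb - μ * c)]
          · rw [max_eq_left (by linarith : (0:ℝ) ≤ z + t),
              max_eq_right (by linarith : -(z + t) ≤ 0),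
              max_eq_left ht0, max_eq_right (by linarith : -t ≤ 0)]
            nlinarith [mul_pos (by linarith : (0:ℝ) < z + t)
              (by linarith : (0:ℝ) < pb - μ * c),
              mul_nonneg ht0 (by linarith : (0:ℝ) ≤ μ * c - μ * ηch)]
  ext s
  simp only [Set.mem_setOf_eq, Set.mem_singleton_iff]
  constructor
  · rintro ⟨hs, hall⟩
    by_contra hne
    have h1 := hall m hmem
    have h2 := key s hs hne
    linarith
  · rintro rfl
    refine ⟨hmem, fun t ht => ?_⟩
    by_cases h : t = m
    · rw [h]
    · exact (key t ht h).le
end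

section
/- Fix η_ch, η_dis ∈ (0, 1], reals p_b ≥ p_s ≥ 0, z ∈ ℝ, S_min ≤ 0 ≤ S_max. Define G_μ(s) = [z+s]⁺·p_b − [z+s]⁻·p_s − μ·(η_ch·[s]⁺ − (1/η_dis)·[s]⁻) for s ∈ [S_min, S_max], set μ₁ = η_dis·p_s, μ₂ = p_s/η_ch, μ₃ = η_dis·p_b, m⁻ = min(0, max(−z, S_min)) and m⁺ = max(0, min(−z, S_max)). Assume μ₁ < μ₂ < μ₃. If μ = μ₂, then the set of minimizers of G_μ on [S_min, S_max] is exactly the closed interval [m⁻, m⁻ + m⁺]. -/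
/-- Region 4 of Theorem 3, case ζ < 1: assuming μ₁ < μ₂ < μ₃, if μ = μ₂ = p_s/η_ch, the minimizers of G_μ on [S_min, S_max] form exactly the interval [m⁻, m⁻ + m⁺]. -/
theorem region4_minimizers (ηch ηdis pb ps z Smin Smax μ : ℝ)
    (hch : ηch ∈ Set.Ioc (0 : ℝ) 1) (hdis : ηdis ∈ Set.Ioc (0 : ℝ) 1)
    (hpb : pb ≥ ps) (hps : ps ≥ 0) (hS1 : Smin ≤ 0) (hS2 : 0 ≤ Smax)
    (G : ℝ → ℝ)
    (hG : ∀ s, G s = max (z + s) 0 * pb - max (-(z + s)) 0 * ps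
        - μ * (ηch * max s 0 - (1 / ηdis) * max (-s) 0))
    (h12 : ηdis * ps < ps / ηch) (h23 : ps / ηch < ηdis * pb) (hμ : μ = ps / ηch) :
    {s ∈ Set.Icc Smin Smax | ∀ t ∈ Set.Icc Smin Smax, G s ≤ G t} = Set.Icc (min 0 (max (-z) Smin)) (min 0 (max (-z) Smin) + max 0 (min (-z) Smax)) := by
  obtain ⟨hc0, hc1⟩ := hch
  obtain ⟨hd0, hd1⟩ := hdis
  have hcne : ηch ≠ 0 := ne_of_gt hc0
  have hdne : ηdis ≠ 0 := ne_of_gt hd0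
  set q := ps / (ηch * ηdis) with hqdef
  set a := min 0 (max (-z) Smin) with ha
  set m := max 0 (min (-z) Smax) with hm
  -- basic price facts
  have h12' : ηdis * ps * ηch < ps := by rwa [lt_div_iff₀ hc0] at h12
  have h23' : ps < ηdis * pb * ηch := by rwa [div_lt_iff₀ hc0] at h23
  have hq1 : ps < q := by
    rw [hqdef, lt_div_iff₀ (mul_pos hc0 hd0)]; nlinarith
  have hq2 : q < pb := by
    rw [hqdef, div_lt_iff₀ (mul_pos hc0 hd0)]; nlinarith
  have hpbps : ps < pb := lt_trans hq1 hq2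
  -- formula for G
  have hG' : ∀ s, G s = pb * max (z + s) 0 - ps * max (-(z + s)) 0
      - ps * max s 0 + q * max (-s) 0 := by
    intro s
    rw [hG s, hμ, hqdef]
    field_simp
    ring
  -- monotonicity lemmas
  have lemDec : ∀ s t : ℝ, s < t → t ≤ 0 → z + t ≤ 0 → G t < G s := by
    intro s t hst ht hzt
    have hs : s ≤ 0 := by linarith
    have hzs : z + s ≤ 0 := by linarith
    rw [hG' s, hG' t, max_eq_right hzs, max_eq_left (by linarith : (0:ℝ) ≤ -(z+s)),
      max_eq_right hs, max_eq_left (by linarith : (0:ℝ) ≤ -s),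
      max_eq_right hzt, max_eq_left (by linarith : (0:ℝ) ≤ -(z+t)),
      max_eq_right ht, max_eq_left (by linarith : (0:ℝ) ≤ -t)]
    nlinarith [mul_pos (sub_pos.2 hq1) (sub_pos.2 hst)]
  have lemConst : ∀ s : ℝ, 0 ≤ s → z + s ≤ 0 → G s = G 0 := by
    intro s hs hzs
    have hz : z ≤ 0 := by linarith
    rw [hG' s, hG' 0, max_eq_right hzs, max_eq_left (by linarith : (0:ℝ) ≤ -(z+s)),
      max_eq_left hs, max_eq_right (by linarith : -s ≤ 0),
      max_eq_right (by linarith : z + 0 ≤ 0), max_eq_left (by linarith : (0:ℝ) ≤ -(z+0)),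
      max_eq_right (le_refl (0:ℝ)), max_eq_right (by norm_num : -(0:ℝ) ≤ 0)]
    ring
  have lemInc2 : ∀ s t : ℝ, s < t → t ≤ 0 → 0 ≤ z + s → G s < G t := by
    intro s t hst ht hzs
    have hs : s ≤ 0 := by linarith
    have hzt : 0 ≤ z + t := by linarith
    rw [hG' s, hG' t, max_eq_left hzs, max_eq_right (by linarith : -(z+s) ≤ 0),
      max_eq_right hs, max_eq_left (by linarith : (0:ℝ) ≤ -s),
      max_eq_left hzt, max_eq_right (by linarith : -(z+t) ≤ 0),
      max_eq_right ht, max_eq_left (by linarith : (0:ℝ) ≤ -t)]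
    nlinarith [mul_pos (sub_pos.2 hq2) (sub_pos.2 hst)]
  have lemInc1 : ∀ s t : ℝ, s < t → 0 ≤ s → 0 ≤ z + s → G s < G t := by
    intro s t hst hs hzs
    have ht : 0 ≤ t := by linarith
    have hzt : 0 ≤ z + t := by linarith
    rw [hG' s, hG' t, max_eq_left hzs, max_eq_right (by linarith : -(z+s) ≤ 0),
      max_eq_left hs, max_eq_right (by linarith : -s ≤ 0),
      max_eq_left hzt, max_eq_right (by linarith : -(z+t) ≤ 0),
      max_eq_left ht, max_eq_right (by linarith : -t ≤ 0)]
    nlinarith [mul_pos (sub_pos.2 hpbps) (sub_pos.2 hst)]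
  have lemInc : ∀ s t : ℝ, s < t → 0 ≤ z + s → G s < G t := by
    intro s t hst hzs
    rcases le_total 0 s with hs | hs
    · exact lemInc1 s t hst hs hzs
    · rcases le_total t 0 with ht | ht
      · exact lemInc2 s t hst ht hzs
      · rcases lt_or_eq_of_le hs with hs0 | hs0
        · have h1 : G s < G 0 := lemInc2 s 0 hs0 le_rfl hzs
          rcases lt_or_eq_of_le ht with ht0 | ht0
          · have h2 : G 0 < G t := lemInc1 0 t ht0 le_rfl (by linarith)
            linarith
          · rw [← ht0]; exact h1
        · subst hs0
          exact lemInc1 0 t hst le_rfl hzs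
  -- facts about a and m
  have ha0 : a ≤ 0 := min_le_left _ _
  have hm0 : 0 ≤ m := le_max_left _ _
  have haS : Smin ≤ a := le_min hS1 (le_max_right _ _)
  have hmS : m ≤ Smax := by rw [hm]; exact max_le hS2 (min_le_right _ _)
  have haz : z + a ≤ 0 ∨ a = Smin := by
    rcases le_total (-z) Smin with h1 | h1
    · right; rw [ha, max_eq_right h1, min_eq_right hS1]
    · rcases le_total (-z) 0 with h2 | h2
      · left; rw [ha, max_eq_left h1, min_eq_right h2]; linarith
      · left; rw [ha, max_eq_left h1, min_eq_left h2]; linarith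
  have hmpos : 0 < m → a = 0 ∧ m ≤ -z := by
    intro hmp
    have h1 : 0 < min (-z) Smax := by
      by_contra h
      push_neg at h
      rw [hm, max_eq_left h] at hmp
      exact absurd hmp (lt_irrefl 0)
    have h2 : 0 < -z := lt_of_lt_of_le h1 (min_le_left _ _)
    refine ⟨?_, ?_⟩
    · rw [ha, min_eq_left]
      exact le_trans (le_of_lt h2) (le_max_left _ _)
    · rw [hm, max_eq_right (le_of_lt h1)]
      exact min_le_left _ _
  have hbS : a + m ≤ Smax := by
    rcases lt_or_eq_of_le hm0 with hmp | hmp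
    · obtain ⟨ha1, _⟩ := hmpos hmp
      rw [ha1, zero_add]; exact hmS
    · rw [← hmp, add_zero]; linarith
  have hbz : 0 ≤ z + (a + m) ∨ a + m = Smax := by
    rcases lt_or_eq_of_le hm0 with hmp | hmp
    · obtain ⟨ha1, hm1⟩ := hmpos hmp
      have h1 : 0 < min (-z) Smax := by
        by_contra h
        push_neg at h
        rw [hm, max_eq_left h] at hmp
        exact absurd hmp (lt_irrefl 0)
      rcases le_total (-z) Smax with h2 | h2
      · left; rw [ha1, zero_add, hm, max_eq_right (le_of_lt h1), min_eq_left h2]; linarith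
      · right; rw [ha1, zero_add, hm, max_eq_right (le_of_lt h1), min_eq_right h2]
    · rw [← hmp, add_zero]
      have h1 : min (-z) Smax ≤ 0 := by
        calc min (-z) Smax ≤ m := le_max_right _ _
        _ = 0 := hmp.symm
      rcases le_total (-z) Smin with h3 | h3
      · left; rw [ha, max_eq_right h3, min_eq_right hS1]; linarith
      · rcases le_total (-z) 0 with h4 | h4
        · left; rw [ha, max_eq_left h3, min_eq_right h4]; linarith
        · -- 0 ≤ -z, so min(-z,Smax) ≤ 0 forces cases
          have ha1 : a = 0 := by
            rw [ha, min_eq_left]; exact le_trans h4 (le_max_left _ _)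
          rcases le_total (-z) Smax with h5 | h5
          · rw [min_eq_left h5] at h1
            left; rw [ha1]; linarith
          · rw [min_eq_right h5] at h1
            right; rw [ha1]; linarith
  have hconst : ∀ s : ℝ, a ≤ s → s ≤ a + m → G s = G a := by
    intro s hs1 hs2
    rcases lt_or_eq_of_le hm0 with hmp | hmp
    · obtain ⟨ha1, hm1⟩ := hmpos hmp
      rw [ha1, zero_add] at hs2
      rw [ha1] at hs1 ⊢
      exact lemConst s hs1 (by linarith)
    · have : s = a := le_antisymm (by rw [← hmp, add_zero] at hs2; exact hs2) hs1
      rw [this]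
  have hmin : ∀ t ∈ Set.Icc Smin Smax, G a ≤ G t := by
    rintro t ⟨ht1, ht2⟩
    rcases lt_trichotomy t a with h | h | h
    · rcases haz with hz | hz
      · exact le_of_lt (lemDec t a h ha0 hz)
      · exfalso; rw [hz] at h; linarith
    · rw [h]
    · rcases le_total t (a + m) with h2 | h2
      · rw [hconst t (le_of_lt h) h2]
      · have he : G (a + m) = G a := hconst (a + m) (by linarith) le_rfl
        rcases lt_or_eq_of_le h2 with h3 | h3
        · rcases hbz with hz | hz
          · have := lemInc (a + m) t h3 hz
            linarith
          · exfalso; rw [hz] at h3; linarith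
        · rw [← h3, he]
  -- assemble
  ext s
  simp only [Set.mem_setOf_eq, Set.mem_Icc]
  constructor
  · rintro ⟨⟨hs1, hs2⟩, hsmin⟩
    constructor
    · by_contra h
      push_neg at h
      rcases haz with hz | hz
      · have h1 : G a < G s := lemDec s a h ha0 hz
        have h2 : G s ≤ G a := hsmin a ⟨haS, by linarith⟩
        linarith
      · rw [hz] at h; linarith
    · by_contra h
      push_neg at h
      rcases hbz with hz | hz
      · have h1 : G (a + m) < G s := lemInc (a + m) s h hz
        have h2 : G s ≤ G (a + m) := hsmin (a + m) ⟨by linarith, hbS⟩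
        have h3 : G (a + m) = G a := hconst (a + m) (by linarith) le_rfl
        linarith
      · rw [hz] at h; linarith
  · rintro ⟨h1, h2⟩
    refine ⟨⟨by linarith, by linarith⟩, ?_⟩
    intro t ht
    rw [hconst s h1 h2]
    exact hmin t ht
end

section
/- Fix η_ch, η_dis ∈ (0, 1], reals p_b ≥ p_s ≥ 0, z ∈ ℝ, S_min ≤ 0 ≤ S_max, and μ ∈ ℝ. Define G_μ(s) = [z+s]⁺·p_b − [z+s]⁻·p_s − μ·(η_ch·[s]⁺ − (1/η_dis)·[s]⁻) for s ∈ [S_min, S_max], set μ₂ = p_s/η_ch and μ₃ = η_dis·p_b, and write m⁻ = min(0, max(−z, S_min)), m⁺ = max(0, min(−z, S_max)). If μ₂ < μ < μ₃, then the set of minimizers of G_μ on [S_min, S_max] is exactly {m⁻ + m⁺}. -/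
/-!
In terms of the net load `y = z + s` and the terminal output `s`, `G` is the sum of two
functions that are linear on each side of `0`: slopes `p_s, p_b` in `y`, and slopes
`-μ/η_dis, -μ η_ch` in `s`. The second one is convex, so on each side of `s = -z` the slope of
`G` is squeezed between `p_s - μ η_ch < 0` and `p_b - μ/η_dis > 0`. Hence `G` strictly
decreases up to `-z` and strictly increases after it, and its unique minimizer on
`[S_min, S_max]` is the projection of `-z` onto that interval, which is `m⁻ + m⁺`.
-/

open Set

def twoSlope (l r y : ℝ) : ℝ := r * max y 0 - l * max (-y) 0

section TwoSlope

variable {l r x y : ℝ}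

theorem twoSlope_of_nonpos (hy : y ≤ 0) : twoSlope l r y = l * y := by
  rw [twoSlope, max_eq_right hy, max_eq_left (neg_nonneg.2 hy)]
  ring

theorem twoSlope_of_nonneg (hy : 0 ≤ y) : twoSlope l r y = r * y := by
  rw [twoSlope, max_eq_left hy, max_eq_right (neg_nonpos.2 hy)]
  ring

theorem twoSlope_sub_twoSlope_le (hlr : l ≤ r) (hxy : x ≤ y) :
    twoSlope l r y - twoSlope l r x ≤ r * (y - x) := by
  rcases le_total y 0 with hy | hy <;> rcases le_total x 0 with hx | hx
  · rw [twoSlope_of_nonpos hy, twoSlope_of_nonpos hx]; nlinarith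
  · obtain rfl : x = y := by linarith
    simp
  · rw [twoSlope_of_nonneg hy, twoSlope_of_nonpos hx]; nlinarith
  · rw [twoSlope_of_nonneg hy, twoSlope_of_nonneg hx]; exact le_of_eq (by ring)

theorem le_twoSlope_sub_twoSlope (hlr : l ≤ r) (hxy : x ≤ y) :
    l * (y - x) ≤ twoSlope l r y - twoSlope l r x := by
  rcases le_total y 0 with hy | hy <;> rcases le_total x 0 with hx | hx
  · rw [twoSlope_of_nonpos hy, twoSlope_of_nonpos hx]; exact le_of_eq (by ring)
  · obtain rfl : x = y := by linarith
    simp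
  · rw [twoSlope_of_nonneg hy, twoSlope_of_nonpos hx]; nlinarith
  · rw [twoSlope_of_nonneg hy, twoSlope_of_nonneg hx]; nlinarith

end TwoSlope

section ShiftedSum

variable {l₁ r₁ l₂ r₂ z : ℝ}

theorem strictAntiOn_twoSlope_add_twoSlope (hlr : l₂ ≤ r₂) (hneg : l₁ + r₂ < 0) :
    StrictAntiOn (fun s ↦ twoSlope l₁ r₁ (z + s) + twoSlope l₂ r₂ s) (Iic (-z)) := by
  intro t ht s hs hts
  have hz : twoSlope l₁ r₁ (z + s) - twoSlope l₁ r₁ (z + t) = l₁ * (s - t) := by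
    rw [twoSlope_of_nonpos (by linarith [mem_Iic.1 hs]),
      twoSlope_of_nonpos (by linarith [mem_Iic.1 ht])]
    ring
  have hslope := twoSlope_sub_twoSlope_le hlr hts.le
  linarith [mul_neg_of_neg_of_pos hneg (sub_pos.2 hts)]

theorem strictMonoOn_twoSlope_add_twoSlope (hlr : l₂ ≤ r₂) (hpos : 0 < r₁ + l₂) :
    StrictMonoOn (fun s ↦ twoSlope l₁ r₁ (z + s) + twoSlope l₂ r₂ s) (Ici (-z)) := by
  intro t ht s hs hts
  have hz : twoSlope l₁ r₁ (z + s) - twoSlope l₁ r₁ (z + t) = r₁ * (s - t) := by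
    rw [twoSlope_of_nonneg (by linarith [mem_Ici.1 hs]),
      twoSlope_of_nonneg (by linarith [mem_Ici.1 ht])]
    ring
  have hslope := le_twoSlope_sub_twoSlope hlr hts.le
  linarith [mul_pos hpos (sub_pos.2 hts)]

end ShiftedSum

theorem setOf_forall_le_Icc_eq_of_strictAntiOn_of_strictMonoOn {α β : Type*} [LinearOrder α]
    [Preorder β] {f : α → β} {a b c : α} (hab : a ≤ b) (hanti : StrictAntiOn f (Iic c))
    (hmono : StrictMonoOn f (Ici c)) :
    {s ∈ Icc a b | ∀ t ∈ Icc a b, f s ≤ f t} = {max a (min c b)} := by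
  set m := max a (min c b)
  have hm : m ∈ Icc a b := ⟨le_max_left _ _, max_le hab (min_le_right _ _)⟩
  have hlt : ∀ t ∈ Icc a b, t ≠ m → f m < f t := by
    rintro t ⟨hat, htb⟩ htm
    rcases htm.lt_or_gt with htm | hmt
    · have hmc : m ≤ c := by grind
      exact hanti (htm.le.trans hmc) hmc htm
    · have hcm : c ≤ m := by grind
      exact hmono hcm (hcm.trans hmt.le) hmt
  ext s
  refine ⟨fun ⟨hs, hmin⟩ ↦ ?_, ?_⟩
  · by_contra hsm
    exact (hlt s hs hsm).not_ge (hmin m hm)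
  · rintro rfl
    exact ⟨hm, fun t ht ↦ (eq_or_ne t m).elim (fun h ↦ h ▸ le_rfl) fun h ↦ (hlt t ht h).le⟩

theorem min_max_add_max_min_eq_max_min {a b x : ℝ} (ha : a ≤ 0) (hb : 0 ≤ b) :
    min 0 (max x a) + max 0 (min x b) = max a (min x b) := by
  rcases le_total x 0 with hx | hx
  · rw [max_eq_left (min_le_left x b |>.trans hx), min_eq_right (max_le hx ha), add_zero,
      min_eq_left (hx.trans hb), max_comm]
  · rw [min_eq_left (le_max_of_le_left hx), max_eq_right (le_min hx hb), zero_add,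
      max_eq_right (ha.trans (le_min hx hb))]

theorem region5_minimizers_general (ηch ηdis pb ps z Smin Smax μ : ℝ)
    (hch : ηch ∈ Set.Ioc (0 : ℝ) 1) (hdis : ηdis ∈ Set.Ioc (0 : ℝ) 1)
    (hps : ps ≥ 0) (hS1 : Smin ≤ 0) (hS2 : 0 ≤ Smax)
    (G : ℝ → ℝ)
    (hG : ∀ s, G s = max (z + s) 0 * pb - max (-(z + s)) 0 * ps
        - μ * (ηch * max s 0 - (1 / ηdis) * max (-s) 0))
    (hμ1 : ps / ηch < μ) (hμ2 : μ < ηdis * pb) :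
    {s ∈ Set.Icc Smin Smax | ∀ t ∈ Set.Icc Smin Smax, G s ≤ G t} = {min 0 (max (-z) Smin) + max 0 (min (-z) Smax)} := by
  obtain ⟨hch0, hch1⟩ := hch
  obtain ⟨hdis0, hdis1⟩ := hdis
  have hps_lt : ps < μ * ηch := (div_lt_iff₀ hch0).1 hμ1
  have hpb_gt : μ / ηdis < pb := (div_lt_iff₀' hdis0).2 hμ2
  have hμ : 0 < μ := lt_of_le_of_lt (div_nonneg hps hch0.le) hμ1
  have hslopes : μ * ηch ≤ μ / ηdis := by
    rw [le_div_iff₀ hdis0, mul_assoc]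
    exact mul_le_of_le_one_right hμ.le (mul_le_one₀ hch1 hdis0.le hdis1)
  have hG' : G = fun s ↦ twoSlope ps pb (z + s) + twoSlope (-(μ / ηdis)) (-(μ * ηch)) s := by
    funext s
    rw [hG, twoSlope, twoSlope]
    ring
  rw [min_max_add_max_min_eq_max_min hS1 hS2, hG']
  exact setOf_forall_le_Icc_eq_of_strictAntiOn_of_strictMonoOn (hS1.trans hS2)
    (strictAntiOn_twoSlope_add_twoSlope (neg_le_neg hslopes) (by linarith))
    (strictMonoOn_twoSlope_add_twoSlope (neg_le_neg hslopes) (by linarith))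

/-- Region 5 of Theorem 3, case ζ < 1: if μ₂ < μ < μ₃, the minimizers of G_μ on [S_min, S_max] are exactly {m⁻ + m⁺}. -/
theorem region5_minimizers (ηch ηdis pb ps z Smin Smax μ : ℝ)
    (hch : ηch ∈ Set.Ioc (0 : ℝ) 1) (hdis : ηdis ∈ Set.Ioc (0 : ℝ) 1)
    (hpb : pb ≥ ps) (hps : ps ≥ 0) (hS1 : Smin ≤ 0) (hS2 : 0 ≤ Smax)
    (G : ℝ → ℝ)
    (hG : ∀ s, G s = max (z + s) 0 * pb - max (-(z + s)) 0 * ps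
        - μ * (ηch * max s 0 - (1 / ηdis) * max (-s) 0))
    (hμ1 : ps / ηch < μ) (hμ2 : μ < ηdis * pb) :
    {s ∈ Set.Icc Smin Smax | ∀ t ∈ Set.Icc Smin Smax, G s ≤ G t} = {min 0 (max (-z) Smin) + max 0 (min (-z) Smax)} :=
  region5_minimizers_general ηch ηdis pb ps z Smin Smax μ hch hdis hps hS1 hS2 G hG hμ1 hμ2
end

section
/- Fix η_ch, η_dis ∈ (0, 1], reals p_b ≥ p_s ≥ 0, z ∈ ℝ, S_min ≤ 0 ≤ S_max, and μ ∈ ℝ. Define G_μ(s) = [z+s]⁺·p_b − [z+s]⁻·p_s − μ·(η_ch·[s]⁺ − (1/η_dis)·[s]⁻) for s ∈ [S_min, S_max], and set μ₂ = p_s/η_ch and μ₃ = η_dis·p_b. If μ₃ < μ < μ₂, then the set of minimizers of G_μ on [S_min, S_max] is exactly {0}. -/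
lemma fdiff_bounds (pb ps a b : ℝ) (hpb : pb ≥ ps) (hps : ps ≥ 0) (hab : a ≤ b) :
    ps * (b - a) ≤ (max b 0 * pb - max (-b) 0 * ps) - (max a 0 * pb - max (-a) 0 * ps) ∧
    (max b 0 * pb - max (-b) 0 * ps) - (max a 0 * pb - max (-a) 0 * ps) ≤ pb * (b - a) := by
  rcases le_total a 0 with h1 | h1 <;> rcases le_total b 0 with h2 | h2 <;>
    constructor <;>
    simp [max_eq_left, max_eq_right, h1, h2, neg_nonneg.mpr, neg_nonpos.mpr] <;>
    nlinarith

/-- Region 5 of Theorem 3, case ζ ≥ 1: if μ₃ < μ < μ₂, the minimizers of G_μ on [S_min, S_max] are exactly {0}. -/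
theorem region5_zeta_ge_one_minimizers (ηch ηdis pb ps z Smin Smax μ : ℝ)
    (hch : ηch ∈ Set.Ioc (0 : ℝ) 1) (hdis : ηdis ∈ Set.Ioc (0 : ℝ) 1)
    (hpb : pb ≥ ps) (hps : ps ≥ 0) (hS1 : Smin ≤ 0) (hS2 : 0 ≤ Smax)
    (G : ℝ → ℝ)
    (hG : ∀ s, G s = max (z + s) 0 * pb - max (-(z + s)) 0 * ps
        - μ * (ηch * max s 0 - (1 / ηdis) * max (-s) 0))
    (hμ1 : ηdis * pb < μ) (hμ2 : μ < ps / ηch) :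
    {s ∈ Set.Icc Smin Smax | ∀ t ∈ Set.Icc Smin Smax, G s ≤ G t} = {0} := by
  obtain ⟨hch0, hch1⟩ := hch
  obtain ⟨hdis0, hdis1⟩ := hdis
  have hμch : μ * ηch < ps := (lt_div_iff₀ hch0).mp hμ2
  have hμdis : pb * ηdis < μ := by linarith
  -- key: for s ≠ 0, G 0 < G s
  have key : ∀ s : ℝ, s ≠ 0 → G 0 < G s := by
    intro s hs
    rw [hG s, hG 0]
    rcases lt_or_gt_of_ne hs with hneg | hpos
    · -- s < 0
      have h1 : max s 0 = 0 := max_eq_right hneg.le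
      have h2 : max (-s) 0 = -s := max_eq_left (by linarith)
      have h3 : max (-(0:ℝ)) 0 = 0 := by simp
      have h4 : max (0:ℝ) 0 = 0 := by simp
      have hb := (fdiff_bounds pb ps (z + s) (z + 0) hpb hps (by linarith)).2
      have hμd : μ / ηdis > pb := (lt_div_iff₀ hdis0).mpr hμdis
      rw [h1, h2]
      have h5 : pb * (-s) < μ / ηdis * (-s) :=
        mul_lt_mul_of_pos_right hμd (by linarith)
      have h6 : μ / ηdis * (-s) = μ * (1 / ηdis * -s) := by field_simp
      simp only [add_zero, neg_zero, max_self] at hb ⊢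
      linarith
    · -- s > 0
      have h1 : max s 0 = s := max_eq_left hpos.le
      have h2 : max (-s) 0 = 0 := max_eq_right (by linarith)
      have hb := (fdiff_bounds pb ps (z + 0) (z + s) hpb hps (by linarith)).1
      rw [h1, h2]
      simp only [add_zero, neg_zero, max_self] at hb ⊢
      nlinarith
  ext s
  simp only [Set.mem_setOf_eq, Set.mem_singleton_iff, Set.mem_Icc]
  constructor
  · rintro ⟨⟨hs1, hs2⟩, hmin⟩
    by_contra hs
    have := hmin 0 ⟨hS1, hS2⟩
    exact absurd this (not_le.mpr (key s hs))
  · rintro rfl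
    refine ⟨⟨hS1, hS2⟩, fun t _ => ?_⟩
    rcases eq_or_ne t 0 with rfl | ht
    · exact le_rfl
    · exact (key t ht).le
end

section
/- Fix η_ch, η_dis ∈ (0, 1], reals p_b ≥ p_s ≥ 0, z ∈ ℝ, S_min ≤ 0 ≤ S_max. Define G_μ(s) = [z+s]⁺·p_b − [z+s]⁻·p_s − μ·(η_ch·[s]⁺ − (1/η_dis)·[s]⁻) for s ∈ [S_min, S_max], set μ₂ = p_s/η_ch, μ₃ = η_dis·p_b, μ₄ = p_b/η_ch, and write m⁻ = min(0, max(−z, S_min)), m⁺ = max(0, min(−z, S_max)). Assume μ₂ < μ₃ < μ₄. If μ = μ₃, then the set of minimizers of G_μ on [S_min, S_max] is exactly the closed interval [m⁻ + m⁺, m⁺]. -/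
/-- Auxiliary: if `G` is strictly smaller at `a` than to the left, constant on `[a,b]`,
and strictly smaller at `b` than to the right, the minimizer set on `[Smin, Smax]`
is exactly `[a,b]`. -/
lemma minset_aux (G : ℝ → ℝ) (Smin Smax a b : ℝ)
    (hab : a ≤ b) (h1 : Smin ≤ a) (h2 : b ≤ Smax)
    (hconst : ∀ s, a ≤ s → s ≤ b → G s = G b)
    (hleft : ∀ s, Smin ≤ s → s < a → G a < G s)
    (hright : ∀ s, s ≤ Smax → b < s → G b < G s) :
    {s ∈ Set.Icc Smin Smax | ∀ t ∈ Set.Icc Smin Smax, G s ≤ G t} = Set.Icc a b := by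
  ext s
  simp only [Set.mem_setOf_eq, Set.mem_Icc]
  constructor
  · rintro ⟨⟨hs1, hs2⟩, hmin⟩
    constructor
    · by_contra h
      push_neg at h
      have h3 := hleft s hs1 h
      have h4 := hmin a ⟨h1, hab.trans h2⟩
      linarith
    · by_contra h
      push_neg at h
      have h3 := hright s hs2 h
      have h4 := hmin b ⟨h1.trans hab, h2⟩
      linarith
  · rintro ⟨hsa, hsb⟩
    refine ⟨⟨h1.trans hsa, hsb.trans h2⟩, ?_⟩
    intro t ⟨ht1, ht2⟩
    have hs : G s = G b := hconst s hsa hsb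
    rcases lt_or_ge t a with h | h
    · have h3 := hleft t ht1 h
      have h4 : G a = G b := hconst a le_rfl hab
      linarith
    · rcases le_or_gt t b with h' | h'
      · rw [hs, hconst t h h']
      · have h3 := hright t ht2 h'
        linarith

/-- Region 6 of Theorem 3, case ζ < 1: assuming μ₂ < μ₃ < μ₄, if μ = μ₃ = η_dis·p_b, the minimizers of G_μ on [S_min, S_max] form exactly the interval [m⁻ + m⁺, m⁺]. -/
theorem region6_minimizers (ηch ηdis pb ps z Smin Smax μ : ℝ)
    (hch : ηch ∈ Set.Ioc (0 : ℝ) 1) (hdis : ηdis ∈ Set.Ioc (0 : ℝ) 1)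
    (hpb : pb ≥ ps) (hps : ps ≥ 0) (hS1 : Smin ≤ 0) (hS2 : 0 ≤ Smax)
    (G : ℝ → ℝ)
    (hG : ∀ s, G s = max (z + s) 0 * pb - max (-(z + s)) 0 * ps
        - μ * (ηch * max s 0 - (1 / ηdis) * max (-s) 0))
    (h23 : ps / ηch < ηdis * pb) (h34 : ηdis * pb < pb / ηch) (hμ : μ = ηdis * pb) :
    {s ∈ Set.Icc Smin Smax | ∀ t ∈ Set.Icc Smin Smax, G s ≤ G t} = Set.Icc (min 0 (max (-z) Smin) + max 0 (min (-z) Smax)) (max 0 (min (-z) Smax)) := by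
  obtain ⟨hch0, hch1⟩ := hch
  obtain ⟨hdis0, hdis1⟩ := hdis
  have hpb0 : 0 ≤ pb := le_trans hps hpb
  have hA : ps < ηch * ηdis * pb := by
    rw [div_lt_iff₀ hch0] at h23; nlinarith
  have hB : ηch * ηdis * pb < pb := by
    rw [lt_div_iff₀ hch0] at h34; nlinarith
  have hps_pb : ps < pb := by nlinarith
  -- simplified formula for G
  have hG' : ∀ s, G s = pb * max (z + s) 0 - ps * max (-(z + s)) 0
      - ηdis * ηch * pb * max s 0 + pb * max (-s) 0 := by
    intro s
    rw [hG, hμ]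
    field_simp
    ring
  rcases le_total z 0 with hz | hz
  · -- case z ≤ 0 : the interval is the single point  c = min (-z) Smax
    have hmz : (0:ℝ) ≤ -z := by linarith
    have e1 : min 0 (max (-z) Smin) = 0 := min_eq_left (hmz.trans (le_max_left _ _))
    have e2 : max 0 (min (-z) Smax) = min (-z) Smax := max_eq_right (le_min hmz hS2)
    rw [e1, e2, zero_add]
    have hc0 : (0:ℝ) ≤ min (-z) Smax := le_min hmz hS2
    have hcz : min (-z) Smax ≤ -z := min_le_left _ _
    apply minset_aux G Smin Smax _ _ le_rfl (hS1.trans hc0) (min_le_right _ _)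
    · intro s hs1 hs2
      rw [le_antisymm hs2 hs1]
    · -- strictly decreasing to the left of c
      intro s hs1 hs2
      have hGc : G (min (-z) Smax) = ps * (z + min (-z) Smax)
          - ηdis * ηch * pb * min (-z) Smax := by
        rw [hG', max_eq_right (by linarith : z + min (-z) Smax ≤ 0),
          max_eq_left (by linarith : (0:ℝ) ≤ -(z + min (-z) Smax)),
          max_eq_left hc0, max_eq_right (by linarith : -min (-z) Smax ≤ 0)]
        ring
      rcases le_total s 0 with hsn | hsn
      · have hGs : G s = ps * (z + s) - pb * s := by
          rw [hG', max_eq_right (by linarith : z + s ≤ 0),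
            max_eq_left (by linarith : (0:ℝ) ≤ -(z + s)),
            max_eq_right hsn, max_eq_left (by linarith : (0:ℝ) ≤ -s)]
          ring
        rw [hGc, hGs]
        nlinarith [mul_nonneg (sub_nonneg.mpr hA.le) hc0,
          mul_nonpos_of_nonneg_of_nonpos (sub_nonneg.mpr hps_pb.le) hsn]
      · have hGs : G s = ps * (z + s) - ηdis * ηch * pb * s := by
          rw [hG', max_eq_right (by linarith : z + s ≤ 0),
            max_eq_left (by linarith : (0:ℝ) ≤ -(z + s)),
            max_eq_left hsn, max_eq_right (by linarith : -s ≤ 0)]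
          ring
        rw [hGc, hGs]
        nlinarith [mul_pos (sub_pos.mpr hA) (sub_pos.mpr hs2)]
    · -- strictly increasing to the right of c
      intro s hs1 hs2
      have hbz : min (-z) Smax = -z := by
        rcases min_cases (-z) Smax with ⟨h, _⟩ | ⟨h, _⟩
        · exact h
        · exfalso; rw [h] at hs2; linarith
      rw [hbz] at hs2 ⊢
      have hGb : G (-z) = ηdis * ηch * pb * z := by
        rw [hG', show z + -z = (0:ℝ) from by ring, neg_zero, neg_neg, max_self,
          max_eq_left hmz, max_eq_right hz]
        ring
      have hGs : G s = pb * (z + s) - ηdis * ηch * pb * s := by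
        rw [hG', max_eq_left (by linarith : (0:ℝ) ≤ z + s),
          max_eq_right (by linarith : -(z + s) ≤ 0),
          max_eq_left (by linarith : (0:ℝ) ≤ s),
          max_eq_right (by linarith : -s ≤ 0)]
        ring
      rw [hGb, hGs]
      nlinarith [mul_pos (sub_pos.mpr hB) (by linarith : 0 < z + s)]
  · -- case z ≥ 0 : the interval is [max (-z) Smin, 0]
    have hmz : -z ≤ 0 := by linarith
    have e1 : min 0 (max (-z) Smin) = max (-z) Smin := min_eq_right (max_le hmz hS1)
    have e2 : max 0 (min (-z) Smax) = 0 := by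
      rw [min_eq_left (hmz.trans hS2), max_eq_left hmz]
    rw [e1, e2, add_zero]
    have hG0 : G 0 = pb * z := by
      rw [hG', add_zero, neg_zero, max_self, max_eq_left hz, max_eq_right hmz]
      ring
    apply minset_aux G Smin Smax _ _ (max_le hmz hS1) (le_max_right _ _) hS2
    · -- constant on the interval
      intro s hs1 hs2
      have hzs : 0 ≤ z + s := by
        have : -z ≤ s := (le_max_left _ _).trans hs1
        linarith
      rw [hG0, hG', max_eq_left hzs, max_eq_right (by linarith : -(z + s) ≤ 0),
        max_eq_right hs2, max_eq_left (by linarith : (0:ℝ) ≤ -s)]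
      ring
    · -- strictly decreasing to the left
      intro s hs1 hs2
      have hmax : max (-z) Smin = -z := by
        rcases max_cases (-z) Smin with ⟨h, _⟩ | ⟨h, _⟩
        · exact h
        · exfalso; rw [h] at hs2; linarith
      rw [hmax] at hs2 ⊢
      have hGa : G (-z) = pb * z := by
        rw [hG', show z + -z = (0:ℝ) from by ring, neg_zero, neg_neg, max_self,
          max_eq_right hmz, max_eq_left hz]
        ring
      have hGs : G s = ps * (z + s) - pb * s := by
        rw [hG', max_eq_right (by linarith : z + s ≤ 0),
          max_eq_left (by linarith : (0:ℝ) ≤ -(z + s)),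
          max_eq_right (by linarith : s ≤ 0),
          max_eq_left (by linarith : (0:ℝ) ≤ -s)]
        ring
      rw [hGa, hGs]
      nlinarith [mul_pos (sub_pos.mpr hps_pb) (by linarith : 0 < -(z + s))]
    · -- strictly increasing to the right
      intro s hs1 hs2
      have hGs : G s = pb * (z + s) - ηdis * ηch * pb * s := by
        rw [hG', max_eq_left (by linarith : (0:ℝ) ≤ z + s),
          max_eq_right (by linarith : -(z + s) ≤ 0),
          max_eq_left hs2.le, max_eq_right (by linarith : -s ≤ 0)]
        ring
      rw [hG0, hGs]
      nlinarith [mul_pos (sub_pos.mpr hB) hs2]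
end

section
/- Fix η_ch, η_dis ∈ (0, 1], reals p_b ≥ p_s ≥ 0, z ∈ ℝ, S_min ≤ 0 ≤ S_max, and μ ∈ ℝ. Define G_μ(s) = [z+s]⁺·p_b − [z+s]⁻·p_s − μ·(η_ch·[s]⁺ − (1/η_dis)·[s]⁻) for s ∈ [S_min, S_max], and set μ₂ = p_s/η_ch, μ₃ = η_dis·p_b, μ₄ = p_b/η_ch. If max(μ₂, μ₃) < μ < μ₄, then the set of minimizers of G_μ on [S_min, S_max] is exactly {m⁺}, where m⁺ = max(0, min(−z, S_max)). -/
/-- Region 7 of Theorem 3: if max(μ₂, μ₃) < μ < μ₄, the minimizers of G_μ on [S_min, S_max] are exactly {m⁺} with m⁺ = max(0, min(−z, S_max)). -/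
theorem region7_minimizers (ηch ηdis pb ps z Smin Smax μ : ℝ)
    (hch : ηch ∈ Set.Ioc (0 : ℝ) 1) (hdis : ηdis ∈ Set.Ioc (0 : ℝ) 1)
    (hpb : pb ≥ ps) (hps : ps ≥ 0) (hS1 : Smin ≤ 0) (hS2 : 0 ≤ Smax)
    (G : ℝ → ℝ)
    (hG : ∀ s, G s = max (z + s) 0 * pb - max (-(z + s)) 0 * ps
        - μ * (ηch * max s 0 - (1 / ηdis) * max (-s) 0))
    (hμ1 : max (ps / ηch) (ηdis * pb) < μ) (hμ2 : μ < pb / ηch) :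
    {s ∈ Set.Icc Smin Smax | ∀ t ∈ Set.Icc Smin Smax, G s ≤ G t} = {max 0 (min (-z) Smax)} := by
  obtain ⟨hch0, hch1⟩ := hch
  obtain ⟨hdis0, hdis1⟩ := hdis
  set M := max 0 (min (-z) Smax) with hM
  have hμ3 : ηdis * pb < μ := lt_of_le_of_lt (le_max_right _ _) hμ1
  have hμ4 : ps / ηch < μ := lt_of_le_of_lt (le_max_left _ _) hμ1
  have hμ5 : ps < μ * ηch := by
    have := (div_lt_iff₀ hch0).mp hμ4; linarith
  have hμ6 : μ * ηch < pb := by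
    have := (lt_div_iff₀ hch0).mp hμ2; linarith
  have hdpos : (0:ℝ) < 1 / ηdis := by positivity
  have hinv : ηdis * (1 / ηdis) = 1 := by field_simp
  have hkey : pb < μ * (1 / ηdis) := by
    rw [mul_one_div]
    exact (lt_div_iff₀ hdis0).mpr (by linarith)
  have hkey2 : ps < μ * (1 / ηdis) := lt_of_le_of_lt hpb hkey
  have hM0 : 0 ≤ M := le_max_left _ _
  have hMS : M ≤ Smax := max_le hS2 (min_le_right _ _)
  -- strict decrease on (-∞, 0]
  have hdec0 : ∀ a b : ℝ, a < b → b ≤ 0 → G b < G a := by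
    intro a b hab hb0
    have ha0 : a ≤ 0 := hab.le.trans hb0
    rw [hG, hG]
    rw [max_eq_right ha0, max_eq_right hb0, max_eq_left (by linarith : (0:ℝ) ≤ -a),
      max_eq_left (by linarith : (0:ℝ) ≤ -b)]
    rcases le_total (z + a) 0 with h1 | h1 <;> rcases le_total (z + b) 0 with h2 | h2
    · rw [max_eq_right h1, max_eq_right h2, max_eq_left (by linarith : (0:ℝ) ≤ -(z+a)),
        max_eq_left (by linarith : (0:ℝ) ≤ -(z+b))]
      nlinarith [mul_pos (sub_pos.2 hab) (sub_pos.2 hkey2)]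
    · rw [max_eq_right h1, max_eq_left h2, max_eq_left (by linarith : (0:ℝ) ≤ -(z+a)),
        max_eq_right (by linarith : -(z+b) ≤ 0)]
      nlinarith [mul_pos (sub_pos.2 hab) (sub_pos.2 hkey),
        mul_nonneg (by linarith : (0:ℝ) ≤ -(z + a)) (by linarith : (0:ℝ) ≤ pb - ps)]
    · linarith
    · rw [max_eq_left h1, max_eq_left h2, max_eq_right (by linarith : -(z+a) ≤ 0),
        max_eq_right (by linarith : -(z+b) ≤ 0)]
      nlinarith [mul_pos (sub_pos.2 hab) (sub_pos.2 hkey)]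
  -- strict decrease on [0, M]
  have hdec1 : ∀ a b : ℝ, 0 ≤ a → a < b → b ≤ M → G b < G a := by
    intro a b ha0 hab hbM
    have hMpos : 0 < M := lt_of_le_of_lt ha0 (lt_of_lt_of_le hab hbM)
    have hmin : 0 < min (-z) Smax := by
      by_contra h
      push_neg at h
      rw [hM, max_eq_left h] at hMpos
      exact lt_irrefl _ hMpos
    have hMz : M ≤ -z := by
      rw [hM, max_eq_right hmin.le]; exact min_le_left _ _
    have hzb : z + b ≤ 0 := by linarith
    have hza : z + a ≤ 0 := by linarith
    have hb0 : 0 ≤ b := le_of_lt (lt_of_le_of_lt ha0 hab)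
    rw [hG, hG]
    rw [max_eq_left ha0, max_eq_left hb0, max_eq_right (by linarith : -a ≤ 0),
      max_eq_right (by linarith : -b ≤ 0), max_eq_right hza, max_eq_right hzb,
      max_eq_left (by linarith : (0:ℝ) ≤ -(z+a)), max_eq_left (by linarith : (0:ℝ) ≤ -(z+b))]
    nlinarith [mul_pos (sub_pos.2 hab) (sub_pos.2 hμ5)]
  -- combined strict decrease on (-∞, M]
  have hdec : ∀ a b : ℝ, a < b → b ≤ M → G b < G a := by
    intro a b hab hbM
    rcases le_or_gt b 0 with hb | hb
    · exact hdec0 a b hab hb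
    · rcases le_or_gt 0 a with ha | ha
      · exact hdec1 a b ha hab hbM
      · exact lt_trans (hdec1 0 b le_rfl hb hbM) (hdec0 a 0 ha le_rfl)
  -- strict increase on [M, Smax]
  have hinc : ∀ a b : ℝ, M ≤ a → a < b → b ≤ Smax → G a < G b := by
    intro a b hMa hab hbS
    have ha0 : 0 ≤ a := le_trans hM0 hMa
    have hza : 0 ≤ z + a := by
      rcases le_or_gt (-z) 0 with h | h
      · linarith
      · rcases le_total Smax (-z) with h' | h'
        · have : M = Smax := by rw [hM, min_eq_right h', max_eq_right hS2]
          linarith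
        · have : M = -z := by rw [hM, min_eq_left h', max_eq_right h.le]
          linarith
    have hzb : 0 ≤ z + b := by linarith
    have hb0 : 0 ≤ b := le_of_lt (lt_of_le_of_lt ha0 hab)
    rw [hG, hG]
    rw [max_eq_left ha0, max_eq_left hb0, max_eq_right (by linarith : -a ≤ 0),
      max_eq_right (by linarith : -b ≤ 0), max_eq_left hza, max_eq_left hzb,
      max_eq_right (by linarith : -(z+a) ≤ 0), max_eq_right (by linarith : -(z+b) ≤ 0)]
    linarith [mul_pos (sub_pos.2 hab) (sub_pos.2 hμ6)]
  have hMI : M ∈ Set.Icc Smin Smax := ⟨le_trans hS1 hM0, hMS⟩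
  ext s
  simp only [Set.mem_setOf_eq, Set.mem_singleton_iff]
  constructor
  · rintro ⟨hsI, hmin⟩
    by_contra hne
    rcases lt_or_gt_of_ne hne with h | h
    · exact absurd (hmin M hMI) (not_le.2 (hdec s M h le_rfl))
    · exact absurd (hmin M hMI) (not_le.2 (hinc M s le_rfl h hsI.2))
  · rintro rfl
    refine ⟨hMI, fun t ht => ?_⟩
    rcases lt_trichotomy t M with h | h | h
    · exact (hdec t M h le_rfl).le
    · exact le_of_eq (by rw [h])
    · exact (hinc M t le_rfl h ht.2).le
end

section
/- Fix η_ch, η_dis ∈ (0, 1], reals p_b ≥ p_s ≥ 0, z ∈ ℝ, S_min ≤ 0 ≤ S_max. Define G_μ(s) = [z+s]⁺·p_b − [z+s]⁻·p_s − μ·(η_ch·[s]⁺ − (1/η_dis)·[s]⁻) for s ∈ [S_min, S_max], set μ₂ = p_s/η_ch, μ₃ = η_dis·p_b, μ₄ = p_b/η_ch, and write m⁺ = max(0, min(−z, S_max)). Assume max(μ₂, μ₃) < μ₄. If μ = μ₄, then the set of minimizers of G_μ on [S_min, S_max] is exactly the closed interval [m⁺, S_max]. -/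
set_option maxHeartbeats 1000000 in
/-- Region 8 of Theorem 3: assuming max(μ₂, μ₃) < μ₄, if μ = μ₄ = p_b/η_ch, the minimizers of G_μ on [S_min, S_max] form exactly the interval [m⁺, S_max]. -/
theorem region8_minimizers (ηch ηdis pb ps z Smin Smax μ : ℝ)
    (hch : ηch ∈ Set.Ioc (0 : ℝ) 1) (hdis : ηdis ∈ Set.Ioc (0 : ℝ) 1)
    (hpb : pb ≥ ps) (hps : ps ≥ 0) (hS1 : Smin ≤ 0) (hS2 : 0 ≤ Smax)
    (G : ℝ → ℝ)
    (hG : ∀ s, G s = max (z + s) 0 * pb - max (-(z + s)) 0 * ps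
        - μ * (ηch * max s 0 - (1 / ηdis) * max (-s) 0))
    (hlt : max (ps / ηch) (ηdis * pb) < pb / ηch) (hμ : μ = pb / ηch) :
    {s ∈ Set.Icc Smin Smax | ∀ t ∈ Set.Icc Smin Smax, G s ≤ G t} = Set.Icc (max 0 (min (-z) Smax)) Smax := by
  obtain ⟨hch0, hch1⟩ := hch
  obtain ⟨hdis0, hdis1⟩ := hdis
  have hlt1 : ps / ηch < pb / ηch := lt_of_le_of_lt (le_max_left _ _) hlt
  have hlt2 : ηdis * pb < pb / ηch := lt_of_le_of_lt (le_max_right _ _) hlt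
  have hpslt : ps < pb := by
    have := (div_lt_div_iff_of_pos_right hch0).mp hlt1
    exact this
  have hpb0 : 0 < pb := lt_of_le_of_lt hps hpslt
  have hc0 : 0 < ηch * ηdis := mul_pos hch0 hdis0
  have hc1 : ηch * ηdis < 1 := by
    have h := mul_lt_mul_of_pos_right hlt2 hch0
    rw [div_mul_cancel₀ _ (ne_of_gt hch0)] at h
    nlinarith
  set m := max 0 (min (-z) Smax) with hm
  clear_value m
  have hm0 : 0 ≤ m := by rw [hm]; exact le_max_left _ _
  have hmS : m ≤ Smax := by rw [hm]; exact max_le hS2 (min_le_right _ _)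
  set q := pb / (ηch * ηdis) with hqdef
  clear_value q
  have hqc : q * (ηch * ηdis) = pb := by rw [hqdef]; exact div_mul_cancel₀ pb (ne_of_gt hc0)
  have hq0 : 0 < q := by rw [hqdef]; exact div_pos hpb0 hc0
  have hqpb : pb < q := by nlinarith
  -- formulas for G
  have e1 : ∀ u, 0 ≤ u → G u = max (z+u) 0 * pb - max (-(z+u)) 0 * ps - pb * u := by
    intro u hu
    rw [hG, hμ, max_eq_left hu, max_eq_right (neg_nonpos.mpr hu)]
    have : pb / ηch * (ηch * u - 1 / ηdis * 0) = pb * u := by field_simp; try ring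
    rw [this]
  have e2 : ∀ u, u ≤ 0 → G u = max (z+u) 0 * pb - max (-(z+u)) 0 * ps - q * u := by
    intro u hu
    rw [hG, hμ, max_eq_right hu, max_eq_left (neg_nonneg.mpr hu)]
    have : pb / ηch * (ηch * 0 - 1 / ηdis * -u) = q * u := by
      rw [hqdef]; field_simp; try ring
    rw [this]
  -- constant value on the plateau
  have val : ∀ u, 0 ≤ u → -z ≤ u → G u = z * pb := by
    intro u hu0 huz
    rw [e1 u hu0, max_eq_left (by linarith : (0:ℝ) ≤ z + u),
      max_eq_right (by linarith : -(z+u) ≤ 0)]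
    ring
  -- Lemma A : G constant on [m, Smax]
  have hA : ∀ s, m ≤ s → s ≤ Smax → G s = G m := by
    intro s hms hsS
    rcases le_or_gt (-z) Smax with h | h
    · have hmz : m = max 0 (-z) := by rw [hm, min_eq_left h]
      have h1 : -z ≤ m := by rw [hmz]; exact le_max_right _ _
      rw [val s (le_trans hm0 hms) (le_trans h1 hms), val m hm0 h1]
    · have hmz : m = Smax := by
        rw [hm, min_eq_right (le_of_lt h), max_eq_right hS2]
      have : s = m := le_antisymm (hmz ▸ hsS) hms
      rw [this]
  -- Lemma B : strict decrease before m
  have hB : ∀ s, Smin ≤ s → s < m → G m < G s := by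
    intro s hs1 hs2
    rcases le_or_gt (-z) Smax with h | h
    · -- m = max 0 (-z), G m = z*pb
      have hmz : m = max 0 (-z) := by rw [hm, min_eq_left h]
      have h1 : -z ≤ m := by rw [hmz]; exact le_max_right _ _
      rw [val m hm0 h1]
      rcases le_or_gt 0 s with hs0 | hs0
      · -- 0 ≤ s < m forces s < -z
        have hsz : s < -z := by
          rcases lt_max_iff.mp (hmz ▸ hs2) with h' | h'
          · linarith
          · exact h'
        rw [e1 s hs0, max_eq_right (by linarith : z + s ≤ 0),
          max_eq_left (by linarith : (0:ℝ) ≤ -(z+s))]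
        nlinarith [mul_pos (show (0:ℝ) < -(z+s) by linarith) (show (0:ℝ) < pb - ps by linarith)]
      · rw [e2 s (le_of_lt hs0)]
        rcases le_or_gt 0 (z + s) with hzs | hzs
        · rw [max_eq_left hzs, max_eq_right (by linarith : -(z+s) ≤ 0)]
          nlinarith [mul_pos (show (0:ℝ) < -s by linarith) (show (0:ℝ) < q - pb by linarith)]
        · rw [max_eq_right (le_of_lt hzs), max_eq_left (by linarith : (0:ℝ) ≤ -(z+s))]
          -- goal: z*pb < 0*pb - (-(z+s))*ps - q*s
          rcases le_or_gt 0 z with hz | hz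
          · nlinarith [mul_pos (show (0:ℝ) < -z - s by linarith) (show (0:ℝ) < q - ps by linarith),
              mul_nonneg hz (show (0:ℝ) ≤ q - pb by linarith)]
          · nlinarith [mul_pos (show (0:ℝ) < -z by linarith) (show (0:ℝ) < pb - ps by linarith),
              mul_pos (show (0:ℝ) < -s by linarith) (show (0:ℝ) < q - ps by linarith)]
    · -- -z > Smax : m = Smax, z + t < 0 for all t ≤ Smax
      have hmz : m = Smax := by rw [hm, min_eq_right (le_of_lt h), max_eq_right hS2]
      have hGm : G m = (z + Smax) * ps - pb * Smax := by
        rw [hmz, e1 Smax hS2, max_eq_right (by linarith : z + Smax ≤ 0),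
          max_eq_left (by linarith : (0:ℝ) ≤ -(z+Smax))]
        ring
      rw [hGm]
      have hsS : s < Smax := hmz ▸ hs2
      rcases le_or_gt 0 s with hs0 | hs0
      · rw [e1 s hs0, max_eq_right (by linarith : z + s ≤ 0),
          max_eq_left (by linarith : (0:ℝ) ≤ -(z+s))]
        nlinarith [mul_pos (show (0:ℝ) < Smax - s by linarith) (show (0:ℝ) < pb - ps by linarith)]
      · rw [e2 s (le_of_lt hs0), max_eq_right (by linarith : z + s ≤ 0),
          max_eq_left (by linarith : (0:ℝ) ≤ -(z+s))]
        nlinarith [mul_pos (show (0:ℝ) < -s by linarith) (show (0:ℝ) < q - ps by linarith),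
          mul_nonneg hS2 (show (0:ℝ) ≤ pb - ps by linarith)]
  -- conclude
  ext s
  simp only [Set.mem_setOf_eq, Set.mem_Icc]
  constructor
  · rintro ⟨⟨h1, h2⟩, hmin⟩
    refine ⟨?_, h2⟩
    by_contra hcon
    push_neg at hcon
    have := hB s h1 hcon
    have := hmin m ⟨le_trans hS1 hm0, hmS⟩
    linarith
  · rintro ⟨h1, h2⟩
    have hsmem : Smin ≤ s ∧ s ≤ Smax := ⟨le_trans hS1 (le_trans hm0 h1), h2⟩
    refine ⟨hsmem, ?_⟩
    intro t ht
    rw [hA s h1 h2]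
    rcases lt_or_ge t m with h | h
    · exact le_of_lt (hB t ht.1 h)
    · rw [hA t h ht.2]
end

section
/- Fix η_ch, η_dis ∈ (0, 1], reals p_b ≥ p_s ≥ 0, z ∈ ℝ, S_min ≤ 0 ≤ S_max, and μ ∈ ℝ. Define G_μ(s) = [z+s]⁺·p_b − [z+s]⁻·p_s − μ·(η_ch·[s]⁺ − (1/η_dis)·[s]⁻) for s ∈ [S_min, S_max], and set μ₄ = p_b/η_ch. If μ > μ₄, then the set of minimizers of G_μ on [S_min, S_max] is exactly {S_max}. -/
/-- Region 9 of Theorem 3: if μ > μ₄ = p_b/η_ch, the minimizers of G_μ on [S_min, S_max] are exactly {S_max}. -/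
theorem region9_minimizers (ηch ηdis pb ps z Smin Smax μ : ℝ)
    (hch : ηch ∈ Set.Ioc (0 : ℝ) 1) (hdis : ηdis ∈ Set.Ioc (0 : ℝ) 1)
    (hpb : pb ≥ ps) (hps : ps ≥ 0) (hS1 : Smin ≤ 0) (hS2 : 0 ≤ Smax)
    (G : ℝ → ℝ)
    (hG : ∀ s, G s = max (z + s) 0 * pb - max (-(z + s)) 0 * ps
        - μ * (ηch * max s 0 - (1 / ηdis) * max (-s) 0))
    (hμ : μ > pb / ηch) :
    {s ∈ Set.Icc Smin Smax | ∀ t ∈ Set.Icc Smin Smax, G s ≤ G t} = {Smax} := by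
  obtain ⟨hch0, hch1⟩ := hch
  obtain ⟨hdis0, hdis1⟩ := hdis
  have hpb0 : (0:ℝ) ≤ pb := le_trans hps hpb
  have hμ0 : 0 < μ := lt_of_le_of_lt (div_nonneg hpb0 hch0.le) hμ
  have hμηch : pb < μ * ηch := by
    rw [gt_iff_lt, div_lt_iff₀ hch0] at hμ; linarith
  have hinv : ηch ≤ 1 / ηdis := by
    rw [le_div_iff₀ hdis0]; nlinarith
  have key : ∀ s t : ℝ, s < t → G t < G s := by
    intro s t hst
    rw [hG s, hG t]
    have h1 : max (z + t) 0 - max (-(z + t)) 0 = z + t := max_zero_sub_max_neg_zero_eq_self _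
    have h2 : max (z + s) 0 - max (-(z + s)) 0 = z + s := max_zero_sub_max_neg_zero_eq_self _
    have h3 : max (z + s) 0 ≤ max (z + t) 0 := max_le_max (by linarith) le_rfl
    have h4 : max (-(z + t)) 0 ≤ max (-(z + s)) 0 := max_le_max (by linarith) le_rfl
    have h5 : max t 0 - max (-t) 0 = t := max_zero_sub_max_neg_zero_eq_self _
    have h6 : max s 0 - max (-s) 0 = s := max_zero_sub_max_neg_zero_eq_self _
    have h7 : max s 0 ≤ max t 0 := max_le_max hst.le le_rfl
    have h8 : max (-t) 0 ≤ max (-s) 0 := max_le_max (by linarith) le_rfl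
    nlinarith [mul_le_mul_of_nonneg_left hinv hμ0.le,
      mul_le_mul_of_nonneg_right (mul_le_mul_of_nonneg_left hinv hμ0.le)
        (sub_nonneg.mpr h8),
      mul_le_mul_of_nonneg_right hμηch.le (sub_nonneg.mpr h8)]
  ext s
  simp only [Set.mem_setOf_eq, Set.mem_singleton_iff, Set.mem_Icc]
  constructor
  · rintro ⟨⟨hs1, hs2⟩, hmin⟩
    by_contra hne
    have hlt : s < Smax := lt_of_le_of_ne hs2 hne
    have := hmin Smax ⟨le_trans hS1 hS2, le_rfl⟩
    exact absurd this (not_le.mpr (key s Smax hlt))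
  · intro heq
    rw [heq]
    refine ⟨⟨le_trans hS1 hS2, le_rfl⟩, fun t ⟨ht1, ht2⟩ => ?_⟩
    rcases eq_or_lt_of_le ht2 with h | h
    · rw [h]
    · exact (key t Smax h).le
end

section
/- Fix η_ch, η_dis ∈ (0, 1], a price p > 0, z ∈ ℝ, and S_min ≤ 0 ≤ S_max. Define G_μ(s) = [z+s]⁺·p − [z+s]⁻·p − μ·(η_ch·[s]⁺ − (1/η_dis)·[s]⁻) for s ∈ [S_min, S_max], and assume η_dis·p < p/η_ch (equivalently η_ch·η_dis < 1). Then the set of minimizers of G_μ on [S_min, S_max] equals: {S_min} if μ < η_dis·p; the closed interval [S_min, 0] if μ = η_dis·p; {0} if η_dis·p < μ < p/η_ch; the closed interval [0, S_max] if μ = p/η_ch; and {S_max} if μ > p/η_ch. -/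
/-!
Since buying and selling prices agree, the grid term `[z+s]⁺·p − [z+s]⁻·p` is just `(z+s)·p`,
so `G_μ` is, up to the constant `z·p`, the piecewise linear function with slope
`p − μ·η_ch = η_ch·(p/η_ch − μ)` on `s ≥ 0` and `p − μ/η_dis = (η_dis·p − μ)/η_dis` on `s ≤ 0`.
The signs of these two slopes, read off from the position of `μ` relative to the thresholds
`η_dis·p < p/η_ch`, locate the minimizers on `[S_min, S_max] ∋ 0`.
-/

open Set

section Minimizers

variable {α β : Type*} [LinearOrder β]

def minimizersOn (f : α → β) (K : Set α) : Set α :=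
  {s ∈ K | ∀ t ∈ K, f s ≤ f t}

theorem minimizersOn_eq_of_lt {f : α → β} {K T : Set α} {m : α} (hm : m ∈ T) (hTK : T ⊆ K)
    (hconst : ∀ s ∈ T, f s = f m) (hlt : ∀ s ∈ K, s ∉ T → f m < f s) :
    minimizersOn f K = T := by
  ext s
  constructor
  · rintro ⟨hsK, hmin⟩
    by_contra hsT
    exact (hlt s hsK hsT).not_ge (hmin m (hTK hm))
  · intro hsT
    refine ⟨hTK hsT, fun t htK => (hconst s hsT).le.trans ?_⟩
    by_cases htT : t ∈ T
    · exact (hconst t htT).ge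
    · exact (hlt t htK htT).le

theorem minimizersOn_eq_singleton {f : α → β} {K : Set α} {m : α} (hm : m ∈ K)
    (hlt : ∀ s ∈ K, s ≠ m → f m < f s) : minimizersOn f K = {m} :=
  minimizersOn_eq_of_lt rfl (singleton_subset_iff.2 hm) (fun _ hs => congrArg f hs) hlt

theorem StrictMono.minimizersOn_Icc [LinearOrder α] {f : α → β} (hf : StrictMono f) {a b : α}
    (hab : a ≤ b) : minimizersOn f (Icc a b) = {a} :=
  minimizersOn_eq_singleton ⟨le_rfl, hab⟩ fun _ ⟨has, _⟩ hne => hf (lt_of_le_of_ne' has hne)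

theorem StrictAnti.minimizersOn_Icc [LinearOrder α] {f : α → β} (hf : StrictAnti f) {a b : α}
    (hab : a ≤ b) : minimizersOn f (Icc a b) = {b} :=
  minimizersOn_eq_singleton ⟨hab, le_rfl⟩ fun _ ⟨_, hsb⟩ hne => hf (lt_of_le_of_ne hsb hne)

end Minimizers

def kink (A B s : ℝ) : ℝ :=
  A * max s 0 + B * min s 0

@[simp]
theorem kink_zero (A B : ℝ) : kink A B 0 = 0 := by
  simp [kink]

theorem kink_of_nonneg (A B : ℝ) {s : ℝ} (hs : 0 ≤ s) : kink A B s = A * s := by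
  simp [kink, hs]

theorem kink_of_nonpos (A B : ℝ) {s : ℝ} (hs : s ≤ 0) : kink A B s = B * s := by
  simp [kink, hs]

section KinkMinimizers

variable {A B a b : ℝ}

theorem kink_strictMono (hA : 0 < A) (hB : 0 < B) : StrictMono (kink A B) :=
  StrictMonoOn.Iic_union_Ici (a := 0)
    (fun x hx y hy hxy => by
      rw [kink_of_nonpos A B hx, kink_of_nonpos A B hy]; exact mul_lt_mul_of_pos_left hxy hB)
    (fun x hx y hy hxy => by
      rw [kink_of_nonneg A B hx, kink_of_nonneg A B hy]; exact mul_lt_mul_of_pos_left hxy hA)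

theorem kink_strictAnti (hA : A < 0) (hB : B < 0) : StrictAnti (kink A B) :=
  StrictAntiOn.Iic_union_Ici (a := 0)
    (fun x hx y hy hxy => by
      rw [kink_of_nonpos A B hx, kink_of_nonpos A B hy]; exact mul_lt_mul_of_neg_left hxy hB)
    (fun x hx y hy hxy => by
      rw [kink_of_nonneg A B hx, kink_of_nonneg A B hy]; exact mul_lt_mul_of_neg_left hxy hA)

theorem minimizersOn_kink_of_pos_of_eq_zero (ha : a ≤ 0) (hb : 0 ≤ b) (hA : 0 < A) (hB : B = 0) :
    minimizersOn (kink A B) (Icc a b) = Icc a 0 := by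
  refine minimizersOn_eq_of_lt ⟨ha, le_rfl⟩ (Icc_subset_Icc_right hb)
    (fun s ⟨_, hs⟩ => by rw [kink_of_nonpos A B hs, hB, zero_mul, kink_zero])
    fun s ⟨has, _⟩ hsT => ?_
  have hs : 0 < s := lt_of_not_ge fun hs => hsT ⟨has, hs⟩
  rw [kink_zero, kink_of_nonneg A B hs.le]
  exact mul_pos hA hs

theorem minimizersOn_kink_of_pos_of_neg (ha : a ≤ 0) (hb : 0 ≤ b) (hA : 0 < A) (hB : B < 0) :
    minimizersOn (kink A B) (Icc a b) = {0} := by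
  refine minimizersOn_eq_singleton ⟨ha, hb⟩ fun s _ hs0 => ?_
  rw [kink_zero]
  rcases hs0.lt_or_gt with hs | hs
  · rw [kink_of_nonpos A B hs.le]; exact mul_pos_of_neg_of_neg hB hs
  · rw [kink_of_nonneg A B hs.le]; exact mul_pos hA hs

theorem minimizersOn_kink_of_eq_zero_of_neg (ha : a ≤ 0) (hb : 0 ≤ b) (hA : A = 0) (hB : B < 0) :
    minimizersOn (kink A B) (Icc a b) = Icc 0 b := by
  refine minimizersOn_eq_of_lt ⟨le_rfl, hb⟩ (Icc_subset_Icc_left ha)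
    (fun s ⟨hs, _⟩ => by rw [kink_of_nonneg A B hs, hA, zero_mul, kink_zero])
    fun s ⟨_, hsb⟩ hsT => ?_
  have hs : s < 0 := lt_of_not_ge fun hs => hsT ⟨hs, hsb⟩
  rw [kink_zero, kink_of_nonpos A B hs.le]
  exact mul_pos_of_neg_of_neg hB hs

end KinkMinimizers
theorem nem1_threshold_structure_general (ηch ηdis p z Smin Smax : ℝ)
    (hch : ηch ∈ Set.Ioc (0 : ℝ) 1) (hdis : ηdis ∈ Set.Ioc (0 : ℝ) 1)
    (hS1 : Smin ≤ 0) (hS2 : 0 ≤ Smax)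
    (hlt : ηdis * p < p / ηch)
    (G : ℝ → ℝ → ℝ)
    (hG : ∀ μ s, G μ s = max (z + s) 0 * p - max (-(z + s)) 0 * p
        - μ * (ηch * max s 0 - (1 / ηdis) * max (-s) 0)) :
    ∀ μ : ℝ,
      (μ < ηdis * p →
        {s ∈ Set.Icc Smin Smax | ∀ t ∈ Set.Icc Smin Smax, G μ s ≤ G μ t} = {Smin}) ∧
      (μ = ηdis * p →
        {s ∈ Set.Icc Smin Smax | ∀ t ∈ Set.Icc Smin Smax, G μ s ≤ G μ t}
          = Set.Icc Smin 0) ∧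
      (ηdis * p < μ ∧ μ < p / ηch →
        {s ∈ Set.Icc Smin Smax | ∀ t ∈ Set.Icc Smin Smax, G μ s ≤ G μ t} = {0}) ∧
      (μ = p / ηch →
        {s ∈ Set.Icc Smin Smax | ∀ t ∈ Set.Icc Smin Smax, G μ s ≤ G μ t}
          = Set.Icc 0 Smax) ∧
      (μ > p / ηch →
        {s ∈ Set.Icc Smin Smax | ∀ t ∈ Set.Icc Smin Smax, G μ s ≤ G μ t} = {Smax}) := by
  obtain ⟨hch0, -⟩ := hch
  obtain ⟨hdis0, -⟩ := hdis
  intro μ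
  have hG_kink : ∀ s, G μ s = z * p + kink (ηch * (p / ηch - μ)) ((ηdis * p - μ) / ηdis) s := by
    intro s
    rw [hG, ← sub_mul, max_zero_sub_max_neg_zero_eq_self, kink]
    rcases le_total s 0 with hs | hs <;> simp [hs] <;> field_simp <;> ring
  have hmin : {s ∈ Icc Smin Smax | ∀ t ∈ Icc Smin Smax, G μ s ≤ G μ t} =
      minimizersOn (kink (ηch * (p / ηch - μ)) ((ηdis * p - μ) / ηdis)) (Icc Smin Smax) := by
    simp only [hG_kink, add_le_add_iff_left]
    rfl
  rw [hmin]
  refine ⟨fun hμ => ?_, fun hμ => ?_, fun hμ => ?_, fun hμ => ?_, fun hμ => ?_⟩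
  · exact (kink_strictMono (mul_pos hch0 (sub_pos.2 (hμ.trans hlt)))
      (div_pos (sub_pos.2 hμ) hdis0)).minimizersOn_Icc (hS1.trans hS2)
  · exact minimizersOn_kink_of_pos_of_eq_zero hS1 hS2 (mul_pos hch0 (sub_pos.2 (hμ ▸ hlt)))
      (by rw [hμ, sub_self, zero_div])
  · exact minimizersOn_kink_of_pos_of_neg hS1 hS2 (mul_pos hch0 (sub_pos.2 hμ.2))
      (div_neg_of_neg_of_pos (sub_neg.2 hμ.1) hdis0)
  · exact minimizersOn_kink_of_eq_zero_of_neg hS1 hS2 (by rw [hμ, sub_self, mul_zero])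
      (div_neg_of_neg_of_pos (sub_neg.2 (hμ ▸ hlt)) hdis0)
  · exact (kink_strictAnti (mul_neg_of_pos_of_neg hch0 (sub_neg.2 hμ))
      (div_neg_of_neg_of_pos (sub_neg.2 (hlt.trans hμ)) hdis0)).minimizersOn_Icc (hS1.trans hS2)

/-- NEM 1.0, Equation (9) / Remark 2: with equal buying and
selling price `p > 0` and `η_dis·p < p/η_ch`, the set of minimizers of
`G_μ(s) = [z+s]⁺·p − [z+s]⁻·p − μ·(η_ch·[s]⁺ − (1/η_dis)·[s]⁻)` on
`[S_min, S_max]` is: `{S_min}` if `μ < η_dis·p`; the interval `[S_min, 0]` if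
`μ = η_dis·p`; `{0}` if `η_dis·p < μ < p/η_ch`; the interval `[0, S_max]` if
`μ = p/η_ch`; and `{S_max}` if `μ > p/η_ch`. -/
theorem nem1_threshold_structure (ηch ηdis p z Smin Smax : ℝ)
    (hch : ηch ∈ Set.Ioc (0 : ℝ) 1) (hdis : ηdis ∈ Set.Ioc (0 : ℝ) 1)
    (hp : p > 0) (hS1 : Smin ≤ 0) (hS2 : 0 ≤ Smax)
    (hlt : ηdis * p < p / ηch)
    (G : ℝ → ℝ → ℝ)
    (hG : ∀ μ s, G μ s = max (z + s) 0 * p - max (-(z + s)) 0 * p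
        - μ * (ηch * max s 0 - (1 / ηdis) * max (-s) 0)) :
    ∀ μ : ℝ,
      (μ < ηdis * p →
        {s ∈ Set.Icc Smin Smax | ∀ t ∈ Set.Icc Smin Smax, G μ s ≤ G μ t} = {Smin}) ∧
      (μ = ηdis * p →
        {s ∈ Set.Icc Smin Smax | ∀ t ∈ Set.Icc Smin Smax, G μ s ≤ G μ t}
          = Set.Icc Smin 0) ∧
      (ηdis * p < μ ∧ μ < p / ηch →
        {s ∈ Set.Icc Smin Smax | ∀ t ∈ Set.Icc Smin Smax, G μ s ≤ G μ t} = {0}) ∧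
      (μ = p / ηch →
        {s ∈ Set.Icc Smin Smax | ∀ t ∈ Set.Icc Smin Smax, G μ s ≤ G μ t}
          = Set.Icc 0 Smax) ∧
      (μ > p / ηch →
        {s ∈ Set.Icc Smin Smax | ∀ t ∈ Set.Icc Smin Smax, G μ s ≤ G μ t} = {Smax}) :=
  nem1_threshold_structure_general ηch ηdis p z Smin Smax hch hdis hS1 hS2 hlt G hG
end

section
/- Fix η_ch, η_dis ∈ (0, 1], reals p_b ≥ p_s ≥ 0, z ∈ ℝ, and S_min ≤ 0 ≤ S_max. For μ ∈ ℝ define G_μ(s) = [z+s]⁺·p_b − [z+s]⁻·p_s − μ·(η_ch·[s]⁺ − (1/η_dis)·[s]⁻) for s ∈ [S_min, S_max]. Let μ₁ < μ₂ be real numbers, let s₁ ∈ [S_min, S_max] be a minimizer of G_{μ₁} on [S_min, S_max], and let s₂ ∈ [S_min, S_max] be a minimizer of G_{μ₂} on [S_min, S_max]. Then s₁ ≤ s₂. -/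
/-- Remark 3, monotonicity of optimal actions: if `μ₁ < μ₂`,
`s₁` minimizes `G_{μ₁}` on `[S_min, S_max]` and `s₂` minimizes `G_{μ₂}` on
`[S_min, S_max]`, then `s₁ ≤ s₂`. -/
theorem optimal_action_monotone (ηch ηdis pb ps z Smin Smax : ℝ)
    (hch : ηch ∈ Set.Ioc (0 : ℝ) 1) (hdis : ηdis ∈ Set.Ioc (0 : ℝ) 1)
    (hpb : pb ≥ ps) (hps : ps ≥ 0) (hS1 : Smin ≤ 0) (hS2 : 0 ≤ Smax)
    (G : ℝ → ℝ → ℝ)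
    (hG : ∀ μ s, G μ s = max (z + s) 0 * pb - max (-(z + s)) 0 * ps
        - μ * (ηch * max s 0 - (1 / ηdis) * max (-s) 0))
    (μ₁ μ₂ : ℝ) (hμ : μ₁ < μ₂)
    (s₁ : ℝ) (hs₁ : s₁ ∈ Set.Icc Smin Smax)
    (hmin₁ : ∀ t ∈ Set.Icc Smin Smax, G μ₁ s₁ ≤ G μ₁ t)
    (s₂ : ℝ) (hs₂ : s₂ ∈ Set.Icc Smin Smax)
    (hmin₂ : ∀ t ∈ Set.Icc Smin Smax, G μ₂ s₂ ≤ G μ₂ t) :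
    s₁ ≤ s₂ := by
  by_contra h
  push_neg at h
  -- f(s) = ηch * max s 0 - (1/ηdis) * max (-s) 0 is strictly increasing
  set f : ℝ → ℝ := fun s => ηch * max s 0 - (1 / ηdis) * max (-s) 0 with hf
  have hc : 0 < (1 : ℝ) / ηdis := by have := hdis.1; positivity
  have hfmono : f s₂ < f s₁ := by
    simp only [hf]
    rcases le_or_gt s₁ 0 with h1 | h1
    · have h2 : s₂ < 0 := lt_of_lt_of_le h h1
      rw [max_eq_right h1, max_eq_right h2.le,
        max_eq_left (by linarith : (0:ℝ) ≤ -s₁), max_eq_left (by linarith : (0:ℝ) ≤ -s₂)]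
      nlinarith [hdis.1]
    · rw [max_eq_left h1.le, max_eq_right (by linarith : -s₁ ≤ 0)]
      rcases le_or_gt s₂ 0 with h2 | h2
      · rw [max_eq_right h2, max_eq_left (by linarith : (0:ℝ) ≤ -s₂)]
        nlinarith [mul_nonneg hc.le (neg_nonneg.2 h2), mul_pos hch.1 h1]
      · rw [max_eq_left h2.le, max_eq_right (by linarith : -s₂ ≤ 0)]
        nlinarith [hch.1]
  have h1 := hmin₁ s₂ hs₂
  have h2 := hmin₂ s₁ hs₁
  rw [hG, hG] at h1 h2
  simp only [hf] at hfmono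
  nlinarith [mul_lt_mul_of_pos_left hfmono (sub_pos.2 hμ)]
end
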